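/- arXiv:1111.2966 — 9 statements merged into one kernel-verified Lean document; each statement's English description precedes it below -/
import Mathlib

section
/- If a permutation u of {1,...,n} is written as u = (n,...,p_n) ∘ ... ∘ (2,...,p_2) ∘ (1,...,p_1) with i ≤ p_i ≤ n, then for every k, p_k = k + |{ ℓ > k : u^{-1}(ℓ) < u^{-1}(k) }|. -/
/-
Write `c i = (i, …, p i)`, which is `Fin.cycleIcc i (p i)`, and `u_m = c (m-1) ⋯ c 0`.
By induction on `m`, `u_m⁻¹` is increasing on `{m, …, n-1}`, and for `j < m` the number of
`ℓ > j` with `u_m⁻¹ ℓ < u_m⁻¹ j` is `p j - j`. Passing to `u_(m+1) = c m * u_m` precomposes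
`u_m⁻¹` with `(c m)⁻¹`, which fixes `{0, …, m-1}` and so preserves the counts at `j < m`.
At `j = m`, `(c m)⁻¹` sends `m` to `p m` and `ℓ > m` to `ℓ - 1` or `ℓ` according as `ℓ ≤ p m`,
so monotonicity of `u_m⁻¹` makes the count `|{m+1, …, p m}| = p m - m`.
-/

/-- The ascending cycle `(i, i+1, ..., p)`: it sends `i ↦ i+1 ↦ ... ↦ p ↦ i`
and fixes every other element.  (When `p ≤ i` it is the identity.) -/
def ascCycle {n : ℕ} (i p : Fin n) : Equiv.Perm (Fin n) :=
  ((List.range n).filterMap fun j =>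
    if h : (i : ℕ) ≤ j ∧ j + 1 ≤ (p : ℕ) then
      some (Equiv.swap (⟨j, by have := p.isLt; omega⟩ : Fin n)
        (⟨j + 1, by have := p.isLt; omega⟩ : Fin n))
    else none).prod

/-- The product `(n, ..., p n) ∘ ... ∘ (2, ..., p 2) ∘ (1, ..., p 1)`
(composition applied right to left, so the cycle at index `1` acts first). -/
def ascFactorization {n : ℕ} (p : Fin n → Fin n) : Equiv.Perm (Fin n) :=
  ((List.ofFn fun i : Fin n => ascCycle i (p i)).reverse).prod

open Equiv Finset

section

variable {n : ℕ}

namespace Fin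

theorem val_cycleIcc (i p x : Fin n) :
    (cycleIcc i p x : ℕ) =
      if x < i ∨ p < x then (x : ℕ) else if x = p then (i : ℕ) else (x : ℕ) + 1 := by
  have : NeZero n := ⟨i.pos.ne'⟩
  rcases lt_or_ge x i with hxi | hix
  · rw [cycleIcc_of_lt hxi, if_pos (Or.inl hxi)]
  rcases lt_or_ge p x with hpx | hxp
  · rw [cycleIcc_of_gt hpx, if_pos (Or.inr hpx)]
  rw [cycleIcc_of_le_of_le hix hxp, if_neg (show ¬(x < i ∨ p < x) by simp [hix, hxp])]
  split_ifs with hx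
  · rfl
  · exact val_add_one_of_lt' (by have := lt_def.mp (lt_of_le_of_ne hxp hx); omega)

theorem val_cycleIcc_symm_of_lt {i p y : Fin n} (hy : i < y) :
    ((cycleIcc i p).symm y : ℕ) = if y ≤ p then (y : ℕ) - 1 else (y : ℕ) := by
  have hx := val_cycleIcc i p ((cycleIcc i p).symm y)
  rw [apply_symm_apply] at hx
  have := ((cycleIcc i p).symm y).isLt
  split_ifs at hx ⊢ <;> omega

theorem cycleIcc_mul_swap {i : Fin n} {j : ℕ} (hij : (i : ℕ) ≤ j) (hj : j + 1 < n) :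
    cycleIcc i ⟨j, by omega⟩ * swap ⟨j, by omega⟩ ⟨j + 1, hj⟩ = cycleIcc i ⟨j + 1, hj⟩ := by
  ext x
  rw [Perm.mul_apply, val_cycleIcc, val_cycleIcc, swap_apply_def]
  simp only [Fin.ext_iff, Fin.lt_def]
  split_ifs <;> simp_all <;> omega

theorem cycleIcc_symm_of_lt {i p x : Fin n} (h : x < i) : (cycleIcc i p).symm x = x := by
  rw [symm_apply_eq, cycleIcc_of_lt h]

end Fin

theorem prod_filterMap_range_ascCycle (i p : Fin n) (m : ℕ) :
    ((List.range m).filterMap fun j =>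
      if h : (i : ℕ) ≤ j ∧ j + 1 ≤ (p : ℕ) then
        some (swap (⟨j, by have := p.isLt; omega⟩ : Fin n)
          (⟨j + 1, by have := p.isLt; omega⟩ : Fin n))
      else none).prod = Fin.cycleIcc i ⟨min m p, by have := p.isLt; omega⟩ := by
  have : NeZero n := ⟨i.pos.ne'⟩
  induction m with
  | zero => simp
  | succ m ih =>
    rw [List.range_succ, List.filterMap_append, List.prod_append, ih]
    by_cases hm : (i : ℕ) ≤ m ∧ m + 1 ≤ (p : ℕ)
    · simp only [List.filterMap_cons, List.filterMap_nil, dif_pos hm, List.prod_singleton]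
      have hmin : min m p = m := by omega
      simp only [hmin]
      rw [Fin.cycleIcc_mul_swap hm.1]
      congr 2
      omega
    · simp only [List.filterMap_cons, List.filterMap_nil, dif_neg hm, List.prod_nil, mul_one]
      rcases le_or_gt (p : ℕ) m with hpm | hmi
      · congr 2
        omega
      · rw [Fin.cycleIcc_ge, Fin.cycleIcc_ge] <;> simp only [Fin.le_def] <;> omega

theorem ascCycle_eq_cycleIcc (i p : Fin n) : ascCycle i p = Fin.cycleIcc i p := by
  rw [ascCycle, prod_filterMap_range_ascCycle]
  congr 2
  omega

def lehmerCode {α : Type*} [LinearOrder α] (w : Fin n → α) (k : Fin n) : ℕ :=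
  #{ℓ | k < ℓ ∧ w ℓ < w k}

section lehmerCode

variable {α : Type*} [LinearOrder α] {w : Fin n → α}

theorem lehmerCode_comp_of_forall_le {k : Fin n} (e : Perm (Fin n)) (he : ∀ x ≤ k, e x = x) :
    lehmerCode (w ∘ e) k = lehmerCode w k := by
  have hek : ∀ ℓ, k < e ℓ ↔ k < ℓ := fun ℓ => by
    refine not_iff_not.mp ⟨fun h => ?_, fun h => ?_⟩ <;> rw [not_lt] at h ⊢
    · rwa [e.injective (he _ h)] at h
    · rwa [he ℓ h]
  refine card_equiv e fun ℓ => ?_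
  simp only [mem_filter, mem_univ, true_and, Function.comp_apply, he k le_rfl, hek]

theorem lehmerCode_comp_cycleIcc_symm {i p : Fin n} (hip : i ≤ p)
    (hw : StrictMonoOn w (Set.Ici i)) :
    (i : ℕ) + lehmerCode (w ∘ (Fin.cycleIcc i p).symm) i = p := by
  have : NeZero n := ⟨i.pos.ne'⟩
  have hi : (Fin.cycleIcc i p).symm i = p := by
    rw [symm_apply_eq, Fin.cycleIcc_of_last hip]
  have hfilter : ({ℓ | i < ℓ ∧ (w ∘ (Fin.cycleIcc i p).symm) ℓ <
      (w ∘ (Fin.cycleIcc i p).symm) i} : Finset (Fin n)) = Ioc i p := by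
    ext ℓ
    simp only [mem_filter, mem_univ, true_and, Function.comp_apply, hi, mem_Ioc]
    refine and_congr_right fun hℓ => ?_
    have hval := Fin.val_cycleIcc_symm_of_lt (p := p) hℓ
    rw [hw.lt_iff_lt _ hip, Fin.lt_def, hval]
    · rw [Fin.lt_def] at hℓ
      split_ifs with h <;> rw [Fin.le_def] at h ⊢ <;> omega
    · rw [Set.mem_Ici, Fin.le_def, hval]
      rw [Fin.lt_def] at hℓ
      split_ifs <;> omega
  rw [lehmerCode, hfilter, Fin.card_Ioc]
  omega

theorem StrictMonoOn.comp_cycleIcc_symm {i : Fin n} (p : Fin n)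
    (hw : StrictMonoOn w (Set.Ici i)) :
    StrictMonoOn (w ∘ (Fin.cycleIcc i p).symm) (Set.Ioi i) := by
  refine hw.comp (fun y hy z hz hyz => ?_) (fun y hy => ?_)
  · rw [Set.mem_Ioi] at hy hz
    rw [Fin.lt_def, Fin.val_cycleIcc_symm_of_lt hy, Fin.val_cycleIcc_symm_of_lt hz]
    rw [Fin.lt_def] at hy hz hyz
    split_ifs <;> omega
  · rw [Set.mem_Ioi] at hy
    rw [Set.mem_Ici, Fin.le_def, Fin.val_cycleIcc_symm_of_lt hy]
    rw [Fin.lt_def] at hy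
    split_ifs <;> omega

end lehmerCode

def ascPartialProd (p : Fin n → Fin n) (m : ℕ) : Perm (Fin n) :=
  ((List.ofFn fun i => Fin.cycleIcc i (p i)).take m).reverse.prod

theorem ascPartialProd_succ (p : Fin n → Fin n) {m : ℕ} (hm : m < n) :
    ascPartialProd p (m + 1) = Fin.cycleIcc ⟨m, hm⟩ (p ⟨m, hm⟩) * ascPartialProd p m := by
  simp [ascPartialProd, List.take_add_one, hm]

theorem ascFactorization_eq_ascPartialProd (p : Fin n → Fin n) :
    ascFactorization p = ascPartialProd p n := by
  simp [ascFactorization, ascPartialProd, ascCycle_eq_cycleIcc, List.take_of_length_le]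

theorem lehmerCode_ascPartialProd_symm {p : Fin n → Fin n} (hp : ∀ i, i ≤ p i) {m : ℕ}
    (hm : m ≤ n) :
    (∀ j : Fin n, (j : ℕ) < m → (j : ℕ) + lehmerCode (ascPartialProd p m).symm j = p j) ∧
      StrictMonoOn (ascPartialProd p m).symm {x | m ≤ (x : ℕ)} := by
  induction m with
  | zero => exact ⟨fun j hj => absurd hj j.val.not_lt_zero, fun _ _ _ _ h => h⟩
  | succ m ih =>
    obtain ⟨hcode, hmono⟩ := ih (by omega)
    set i : Fin n := ⟨m, hm⟩
    have hIci : {x : Fin n | m ≤ (x : ℕ)} = Set.Ici i := by ext; simp [i, Fin.le_def]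
    have hIoi : {x : Fin n | m + 1 ≤ (x : ℕ)} = Set.Ioi i := by ext; simp [i, Fin.lt_def]
    rw [hIci] at hmono
    rw [ascPartialProd_succ p hm, hIoi]
    have hsymm : ⇑(Fin.cycleIcc i (p i) * ascPartialProd p m).symm =
        ⇑(ascPartialProd p m).symm ∘ ⇑(Fin.cycleIcc i (p i)).symm := rfl
    refine ⟨fun j hj => ?_, hsymm ▸ hmono.comp_cycleIcc_symm (p i)⟩
    rw [hsymm]
    rcases (by omega : (j : ℕ) < m ∨ (j : ℕ) = m) with hj | hj
    · rw [lehmerCode_comp_of_forall_le _ fun x hx => Fin.cycleIcc_symm_of_lt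
        (lt_of_le_of_lt hx (by simpa [i, Fin.lt_def] using hj))]
      exact hcode j hj
    · obtain rfl : j = i := Fin.ext hj
      exact lehmerCode_comp_cycleIcc_symm (hp i) hmono

end

/-- If `u = (n,...,p_n) ∘ ... ∘ (1,...,p_1)` with `i ≤ p_i ≤ n`, then
`p_k = k + |{ ℓ > k : u⁻¹(ℓ) < u⁻¹(k) }|` for every `k`. -/
theorem stmt2 (n : ℕ) (u : Equiv.Perm (Fin n)) (p : Fin n → Fin n)
    (hp : ∀ i, i ≤ p i) (hu : u = ascFactorization p) (k : Fin n) :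
    (p k : ℕ) =
      (k : ℕ) + (Finset.univ.filter fun ℓ : Fin n => k < ℓ ∧ u.symm ℓ < u.symm k).card := by
  rw [hu, ascFactorization_eq_ascPartialProd]
  exact ((lehmerCode_ascPartialProd_symm hp le_rfl).1 k k.isLt).symm
end

section
/- If a permutation v of {1,...,n} is written as v = (1,...,q_1) ∘ ... ∘ (n-1,...,q_{n-1}) ∘ (n,...,q_n) with 1 ≤ q_i ≤ i (where (i,...,q_i) is the descending cycle i↦i-1↦...↦q_i↦i), then for every k, q_k = k − |{ ℓ < k : v^{-1}(ℓ) > v^{-1}(k) }|. -/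
/-!
Let `Pₘ = c₁ ∘ ⋯ ∘ cₘ` be the product of the first `m` descending cycles `cᵢ = (i, …, qᵢ)`.
Since `qᵢ ≤ i`, `Pₘ` fixes every point above `m`, so `Pₘ⁻¹` permutes `{1, …, m}`, and
`Pₘ₊₁⁻¹ = cₘ₊₁⁻¹ ∘ Pₘ⁻¹`. On `{1, …, m}` the map `cₘ₊₁⁻¹` is increasing (it shifts `[qₘ₊₁, m]` up
by one), so passing from `Pₘ` to `Pₘ₊₁` does not change the relative order of `P⁻¹(k)` and
`P⁻¹(ℓ)` for `k, ℓ ≤ m`. For the new index `m + 1` we get `Pₘ₊₁⁻¹(m + 1) = qₘ₊₁`, and the `ℓ ≤ m`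
with `Pₘ₊₁⁻¹(ℓ) > qₘ₊₁` are exactly those with `Pₘ⁻¹(ℓ) ∈ [qₘ₊₁, m]`: there are
`m + 1 - qₘ₊₁` of them.
-/

/-- The descending cycle `(i, i-1, ..., q)`: it sends `i ↦ i-1 ↦ ... ↦ q ↦ i`
and fixes every other element.  (When `i ≤ q` it is the identity.) -/
def descCycle {n : ℕ} (i q : Fin n) : Equiv.Perm (Fin n) :=
  (((List.range n).reverse).filterMap fun j =>
    if h : (q : ℕ) + 1 ≤ j ∧ j ≤ (i : ℕ) then
      some (Equiv.swap (⟨j, by have := i.isLt; omega⟩ : Fin n)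
        (⟨j - 1, by have := i.isLt; omega⟩ : Fin n))
    else none).prod

/-- The product `(1, ..., q 1) ∘ (2, ..., q 2) ∘ ... ∘ (n, ..., q n)`
(composition applied right to left, so the cycle at index `n` acts first). -/
def descFactorization {n : ℕ} (q : Fin n → Fin n) : Equiv.Perm (Fin n) :=
  (List.ofFn fun i : Fin n => descCycle i (q i)).prod

open Equiv Finset

variable {n : ℕ}

lemma Equiv.Perm.val_lt_iff_of_forall_le_apply_eq {σ : Perm (Fin n)} {m : ℕ}
    (hσ : ∀ j : Fin n, m ≤ j → σ j = j) (j : Fin n) : (σ j : ℕ) < m ↔ (j : ℕ) < m := by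
  refine ⟨fun h => ?_, fun h => ?_⟩
  · by_contra hj
    rw [hσ j (not_lt.mp hj)] at h
    exact hj h
  · by_contra hσj
    have hfix := hσ (σ j) (not_lt.mp hσj)
    rw [σ.injective hfix] at hσj
    exact hσj h

lemma Equiv.Perm.inv_apply_eq_of_forall_apply_eq {σ : Perm (Fin n)} {m : ℕ}
    (hσ : ∀ j : Fin n, m ≤ j → σ j = j) (j : Fin n) (hj : m ≤ j) : σ⁻¹ j = j :=
  Perm.inv_eq_iff_eq.mpr (hσ j hj).symm

section DescCycle

def descCycleFactor (i q : Fin n) (j : ℕ) : Option (Perm (Fin n)) :=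
  if h : (q : ℕ) + 1 ≤ j ∧ j ≤ (i : ℕ) then
    some (swap (⟨j, by have := i.isLt; omega⟩ : Fin n)
      (⟨j - 1, by have := i.isLt; omega⟩ : Fin n))
  else none

lemma descCycle_eq_prod (i q : Fin n) :
    descCycle i q = ((List.range n).reverse.filterMap (descCycleFactor i q)).prod :=
  rfl

lemma swap_apply_val (a b : ℕ) (ha : a < n) (hb : b < n) (z : Fin n) :
    (swap (⟨a, ha⟩ : Fin n) ⟨b, hb⟩ z : ℕ) =
      if (z : ℕ) = a then b else if (z : ℕ) = b then a else z := by
  rw [swap_apply_def]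
  split_ifs <;> simp_all [Fin.ext_iff]

/-- The first `m` factors `(j, j - 1)`, `j < m`, compose to the descending cycle
`(min i (m - 1), …, q)`. -/
lemma prod_filterMap_descCycleFactor_apply_val (i q : Fin n) (m : ℕ) (x : Fin n) :
    (((List.range m).reverse.filterMap (descCycleFactor i q)).prod x : ℕ) =
      if (x : ℕ) = q then max (q : ℕ) (min i (m - 1))
      else if (q : ℕ) < x ∧ (x : ℕ) ≤ max (q : ℕ) (min i (m - 1)) then (x : ℕ) - 1
      else x := by
  induction m generalizing x with
  | zero =>
    simp only [List.range_zero, List.reverse_nil, List.filterMap_nil, List.prod_nil,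
      Perm.coe_one, id_eq]
    split_ifs <;> omega
  | succ m ih =>
    rw [List.range_succ, List.reverse_append, List.reverse_singleton, List.singleton_append,
      List.filterMap_cons]
    by_cases hj : (q : ℕ) + 1 ≤ m ∧ m ≤ (i : ℕ)
    · rw [show descCycleFactor i q m = _ from dif_pos hj, List.prod_cons, Perm.mul_apply,
        swap_apply_val]
      have hy := ih x
      split_ifs at hy ⊢ <;> omega
    · rw [show descCycleFactor i q m = none from dif_neg hj, ih x]
      have hmax : max (q : ℕ) (min i (m - 1)) = max (q : ℕ) (min i (m + 1 - 1)) := by omega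
      rw [hmax]

lemma descCycle_apply_val (i q x : Fin n) :
    (descCycle i q x : ℕ) =
      if (x : ℕ) = q then max (q : ℕ) i
      else if (q : ℕ) < x ∧ (x : ℕ) ≤ max (q : ℕ) i then (x : ℕ) - 1
      else x := by
  have hi : min (i : ℕ) (n - 1) = i := by have := i.isLt; omega
  rw [descCycle_eq_prod, prod_filterMap_descCycleFactor_apply_val, hi]

lemma descCycle_inv_apply_val {i q : Fin n} (hq : q ≤ i) (y : Fin n) :
    ((descCycle i q)⁻¹ y : ℕ) =
      if (y : ℕ) = i then (q : ℕ)
      else if (q : ℕ) ≤ y ∧ (y : ℕ) < i then (y : ℕ) + 1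
      else y := by
  have hy : (descCycle i q ((descCycle i q)⁻¹ y) : ℕ) = y :=
    congrArg Fin.val ((descCycle i q).apply_symm_apply y)
  rw [descCycle_apply_val] at hy
  have hq' : (q : ℕ) ≤ i := hq
  have := ((descCycle i q)⁻¹ y).isLt
  split_ifs at hy ⊢ <;> omega

lemma descCycle_apply_of_lt {i x : Fin n} (q : Fin n) (hx : i < x) : descCycle i q x = x := by
  have hx' : (i : ℕ) < x := hx
  ext
  rw [descCycle_apply_val]
  split_ifs <;> omega

lemma descCycle_inv_apply_self {i q : Fin n} (hq : q ≤ i) : (descCycle i q)⁻¹ i = q := by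
  ext
  rw [descCycle_inv_apply_val hq, if_pos rfl]

lemma descCycle_inv_lt_inv_iff {i q y z : Fin n} (hq : q ≤ i) (hy : y < i) (hz : z < i) :
    (descCycle i q)⁻¹ y < (descCycle i q)⁻¹ z ↔ y < z := by
  have hy' : (y : ℕ) < i := hy
  have hz' : (z : ℕ) < i := hz
  rw [Fin.lt_def, Fin.lt_def, descCycle_inv_apply_val hq, descCycle_inv_apply_val hq]
  split_ifs <;> omega

lemma lt_descCycle_inv_apply_iff {i q y : Fin n} (hq : q ≤ i) (hy : y < i) :
    q < (descCycle i q)⁻¹ y ↔ q ≤ y := by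
  have hy' : (y : ℕ) < i := hy
  rw [Fin.lt_def, Fin.le_def, descCycle_inv_apply_val hq]
  split_ifs <;> omega

end DescCycle

section DescPrefix

variable (q : Fin n → Fin n)

def descPrefix (m : ℕ) : Perm (Fin n) :=
  ((List.ofFn fun i : Fin n => descCycle i (q i)).take m).prod

lemma descPrefix_length : descPrefix q n = descFactorization q := by
  rw [descPrefix, descFactorization, List.take_of_length_le (by rw [List.length_ofFn])]

lemma descPrefix_succ {m : ℕ} (hm : m < n) :
    descPrefix q (m + 1) = descPrefix q m * descCycle ⟨m, hm⟩ (q ⟨m, hm⟩) := by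
  simp [descPrefix, List.take_add_one, hm]

lemma descPrefix_apply_of_le (m : ℕ) (j : Fin n) (hj : m ≤ j) :
    descPrefix q m j = j := by
  induction m with
  | zero => simp [descPrefix]
  | succ m ih =>
    have hm : m < n := by omega
    rw [descPrefix_succ q hm, Perm.mul_apply,
      descCycle_apply_of_lt _ (show (⟨m, hm⟩ : Fin n) < j from Fin.lt_def.mpr hj), ih (by omega)]

lemma descPrefix_inv_apply_lt_iff (m : ℕ) (j : Fin n) :
    ((descPrefix q m)⁻¹ j : ℕ) < m ↔ (j : ℕ) < m :=
  Perm.val_lt_iff_of_forall_le_apply_eq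
    (Perm.inv_apply_eq_of_forall_apply_eq (descPrefix_apply_of_le q m)) j

end DescPrefix

section InvCount

def invCount (σ : Perm (Fin n)) (k : Fin n) : ℕ :=
  #{ℓ | ℓ < k ∧ σ⁻¹ k < σ⁻¹ ℓ}

variable {q : Fin n → Fin n}

lemma invCount_descPrefix_succ_of_lt (hq : ∀ i, q i ≤ i) {m : ℕ} (hm : m < n) {k : Fin n}
    (hk : (k : ℕ) < m) : invCount (descPrefix q (m + 1)) k = invCount (descPrefix q m) k := by
  have hP : ∀ j : Fin n, (j : ℕ) < m → (descPrefix q m)⁻¹ j < ⟨m, hm⟩ := fun j hj =>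
    Fin.lt_def.mpr ((descPrefix_inv_apply_lt_iff q m j).mpr hj)
  refine congrArg card (filter_congr fun ℓ _ => and_congr_right fun hℓ => ?_)
  rw [descPrefix_succ q hm, mul_inv_rev, Perm.mul_apply, Perm.mul_apply]
  exact descCycle_inv_lt_inv_iff (hq _) (hP k hk) (hP ℓ (by rw [Fin.lt_def] at hℓ; omega))

lemma invCount_descPrefix_succ_self (hq : ∀ i, q i ≤ i) {m : ℕ} (hm : m < n) :
    invCount (descPrefix q (m + 1)) ⟨m, hm⟩ = m - q ⟨m, hm⟩ := by
  set M : Fin n := ⟨m, hm⟩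
  set P := descPrefix q m
  have hPM : P⁻¹ M = M := Perm.inv_apply_eq_of_forall_apply_eq
    (descPrefix_apply_of_le q m) M le_rfl
  have hset : ({ℓ | ℓ < M ∧ (descPrefix q (m + 1))⁻¹ M < (descPrefix q (m + 1))⁻¹ ℓ} : Finset _)
      = (Ico (q M) M).map P.toEmbedding := by
    ext ℓ
    have hPℓ := descPrefix_inv_apply_lt_iff q m ℓ
    rw [mem_filter_univ, mem_map_equiv, mem_Ico, descPrefix_succ q hm, mul_inv_rev,
      Perm.mul_apply, Perm.mul_apply, hPM, descCycle_inv_apply_self (hq M), Fin.lt_def,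
      Fin.lt_def]
    constructor
    · rintro ⟨hℓ, hlt⟩
      have hPℓ' := hPℓ.mpr hℓ
      exact ⟨(lt_descCycle_inv_apply_iff (hq M) (Fin.lt_def.mpr hPℓ')).mp hlt, hPℓ'⟩
    · rintro ⟨hle, hlt⟩
      exact ⟨hPℓ.mp hlt, (lt_descCycle_inv_apply_iff (hq M) (Fin.lt_def.mpr hlt)).mpr hle⟩
  rw [invCount, hset, card_map, Fin.card_Ico]

lemma val_eq_sub_invCount_descPrefix (hq : ∀ i, q i ≤ i) {m : ℕ} (hm : m ≤ n) (k : Fin n)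
    (hk : (k : ℕ) < m) : (q k : ℕ) = k - invCount (descPrefix q m) k := by
  induction m with
  | zero => omega
  | succ m ih =>
    rcases Nat.lt_succ_iff_lt_or_eq.mp hk with hk | hk
    · rw [invCount_descPrefix_succ_of_lt hq (by omega) hk, ih (by omega) hk]
    · obtain ⟨k, hkn⟩ := k
      obtain rfl : k = m := hk
      have hqk : (q ⟨k, hkn⟩ : ℕ) ≤ k := hq ⟨k, hkn⟩
      rw [invCount_descPrefix_succ_self hq hkn]
      show (q ⟨k, hkn⟩ : ℕ) = k - (k - q ⟨k, hkn⟩)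
      omega

end InvCount

/-- If `v = (1,...,q_1) ∘ ... ∘ (n,...,q_n)` with descending cycles and
`1 ≤ q_i ≤ i`, then `q_k = k − |{ ℓ < k : v⁻¹(ℓ) > v⁻¹(k) }|` for every `k`. -/
theorem stmt3 (n : ℕ) (v : Equiv.Perm (Fin n)) (q : Fin n → Fin n)
    (hq : ∀ i, q i ≤ i) (hv : v = descFactorization q) (k : Fin n) :
    (q k : ℕ) =
      (k : ℕ) - (Finset.univ.filter fun ℓ : Fin n => ℓ < k ∧ v.symm k < v.symm ℓ).card := by
  rw [hv, ← descPrefix_length]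
  exact val_eq_sub_invCount_descPrefix hq le_rfl k k.isLt
end

section
/- The number of sequences (p_1,...,p_n) with i ≤ p_i ≤ n for all i equals n!, and the map sending (p_1,...,p_n) to the permutation (n,...,p_n) ∘ ... ∘ (1,...,p_1) is a bijection onto the symmetric group on [n]. -/
/-!
Write `σ = C (n-1) ⋯ C 0` with `C i = (i, …, p i)`. Every cycle `C j` with `j > k` fixes `k`,
while `C k` sends `p k` to `k`; so the tail `C (n-1) ⋯ C k` sends `p k` to `k`. If two admissible
sequences give the same `σ` and agree below `k`, cancelling the common head `C (k-1) ⋯ C 0`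
identifies their tails, whence `p k = q k`. So the map is injective, and it is a bijection
because both sides have `n!` elements: `p i` ranges over `n - i` values.
-/

theorem List.prod_apply_eq_self_of_forall {α : Type*} {l : List (Equiv.Perm α)} {x : α}
    (h : ∀ g ∈ l, g x = x) : l.prod x = x :=
  (MulAction.stabilizer _ x).list_prod_mem h

theorem List.exists_of_mem_drop_ofFn {α : Type*} {n m : ℕ} {f : Fin n → α} {a : α}
    (ha : a ∈ (List.ofFn f).drop m) : ∃ j : Fin n, m ≤ j ∧ f j = a := by
  obtain ⟨t, ht, rfl⟩ := List.mem_iff_getElem.1 ha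
  simp only [List.length_drop, List.length_ofFn] at ht
  exact ⟨⟨m + t, by omega⟩, by simp, by simp⟩

theorem List.take_ofFn_congr {α : Type*} {n m : ℕ} {f g : Fin n → α}
    (h : ∀ j : Fin n, (j : ℕ) < m → f j = g j) :
    (List.ofFn f).take m = (List.ofFn g).take m := by
  refine List.ext_getElem (by simp) fun t ht _ => ?_
  simp only [List.length_take, List.length_ofFn] at ht
  simpa using h ⟨t, by omega⟩ (by simp; omega)

theorem List.prod_reverse_eq_drop_mul_take {M : Type*} [Monoid M] (l : List M) (k : ℕ) :
    l.reverse.prod = (l.drop k).reverse.prod * (l.take k).reverse.prod := by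
  rw [← List.prod_append, ← List.reverse_append, List.take_append_drop]

def ascCyclePartial {n : ℕ} (i p : Fin n) (m : ℕ) : Equiv.Perm (Fin n) :=
  ((List.range m).filterMap fun j =>
    if h : (i : ℕ) ≤ j ∧ j + 1 ≤ (p : ℕ) then
      some (Equiv.swap (⟨j, by have := p.isLt; omega⟩ : Fin n)
        (⟨j + 1, by have := p.isLt; omega⟩ : Fin n))
    else none).prod

theorem ascCyclePartial_succ {n : ℕ} (i p : Fin n) (m : ℕ) :
    ascCyclePartial i p (m + 1) = ascCyclePartial i p m *
      if h : (i : ℕ) ≤ m ∧ m + 1 ≤ (p : ℕ) then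
        Equiv.swap (⟨m, by have := p.isLt; omega⟩ : Fin n) ⟨m + 1, by have := p.isLt; omega⟩
      else 1 := by
  rw [ascCyclePartial, List.range_succ, List.filterMap_append, List.prod_append]
  congr 1
  simp only [List.filterMap_cons, List.filterMap_nil]
  split_ifs <;> simp

-- `ascCyclePartial i p m` is the ascending cycle `(i, …, min p m)`.
theorem val_ascCyclePartial_apply {n : ℕ} (i p : Fin n) (m : ℕ) (x : Fin n) :
    (ascCyclePartial i p m x : ℕ) =
      if (i : ℕ) ≤ x ∧ (x : ℕ) < min (p : ℕ) m then (x : ℕ) + 1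
      else if (x : ℕ) = min (p : ℕ) m ∧ (i : ℕ) ≤ min (p : ℕ) m then (i : ℕ)
      else (x : ℕ) := by
  induction m generalizing x with
  | zero =>
    simp only [ascCyclePartial, List.range_zero, List.filterMap_nil, List.prod_nil,
      Equiv.Perm.coe_one, id_eq]
    split_ifs <;> omega
  | succ m ih =>
    rw [ascCyclePartial_succ, Equiv.Perm.mul_apply]
    by_cases hm : (i : ℕ) ≤ m ∧ m + 1 ≤ (p : ℕ)
    · rw [dif_pos hm]
      have hswap : ((Equiv.swap (⟨m, by omega⟩ : Fin n) ⟨m + 1, by omega⟩ x : Fin n) : ℕ) =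
          if (x : ℕ) = m then m + 1 else if (x : ℕ) = m + 1 then m else x := by
        rw [Equiv.swap_apply_def]
        split_ifs <;> simp_all [Fin.ext_iff]
      rw [ih, hswap]
      split_ifs <;> omega
    · rw [dif_neg hm, Equiv.Perm.one_apply, ih]
      split_ifs <;> omega

theorem ascCycle_eq_ascCyclePartial {n : ℕ} (i p : Fin n) :
    ascCycle i p = ascCyclePartial i p n := rfl

theorem ascCycle_apply_of_lt {n : ℕ} {i x : Fin n} (p : Fin n) (hx : x < i) :
    ascCycle i p x = x := by
  have h := val_ascCyclePartial_apply i p n x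
  rw [← ascCycle_eq_ascCyclePartial] at h
  ext
  rw [h]
  split_ifs <;> omega

theorem ascCycle_apply_of_le {n : ℕ} {i p : Fin n} (hip : i ≤ p) : ascCycle i p p = i := by
  have h := val_ascCyclePartial_apply i p n p
  rw [← ascCycle_eq_ascCyclePartial] at h
  ext
  rw [h]
  have := p.isLt
  split_ifs <;> omega

section Factorization

variable {n : ℕ}

-- With `C i = ascCycle i (p i)`, `ascTail p k = C (n-1) ⋯ C k` and `ascHead p k = C (k-1) ⋯ C 0`.
def ascTail (p : Fin n → Fin n) (k : ℕ) : Equiv.Perm (Fin n) :=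
  ((List.ofFn fun i => ascCycle i (p i)).drop k).reverse.prod

def ascHead (p : Fin n → Fin n) (k : ℕ) : Equiv.Perm (Fin n) :=
  ((List.ofFn fun i => ascCycle i (p i)).take k).reverse.prod

theorem ascFactorization_eq_ascTail_mul_ascHead (p : Fin n → Fin n) (k : ℕ) :
    ascFactorization p = ascTail p k * ascHead p k :=
  List.prod_reverse_eq_drop_mul_take _ k

theorem ascHead_congr {p q : Fin n → Fin n} {k : ℕ} (h : ∀ j : Fin n, (j : ℕ) < k → p j = q j) :
    ascHead p k = ascHead q k := by
  rw [ascHead, ascHead, List.take_ofFn_congr fun j hj => by rw [h j hj]]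

theorem ascTail_apply {p : Fin n → Fin n} (hp : ∀ i, i ≤ p i) (k : Fin n) :
    ascTail p k (p k) = k := by
  rw [ascTail, List.drop_eq_getElem_cons (by simp), List.reverse_cons, List.prod_append,
    List.prod_singleton, Equiv.Perm.mul_apply, List.getElem_ofFn, Fin.eta,
    ascCycle_apply_of_le (hp k)]
  refine List.prod_apply_eq_self_of_forall fun g hg => ?_
  obtain ⟨j, hkj, rfl⟩ := List.exists_of_mem_drop_ofFn (List.mem_reverse.1 hg)
  exact ascCycle_apply_of_lt _ (Fin.lt_def.2 hkj)

theorem apply_eq_of_ascFactorization_eq {p q : Fin n → Fin n} (hp : ∀ i, i ≤ p i)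
    (hq : ∀ i, i ≤ q i) (h : ascFactorization p = ascFactorization q) {k : Fin n}
    (hlt : ∀ j < k, p j = q j) : p k = q k := by
  have htail : ascTail p k = ascTail q k := by
    rw [ascFactorization_eq_ascTail_mul_ascHead p k, ascFactorization_eq_ascTail_mul_ascHead q k,
      ascHead_congr hlt] at h
    exact mul_right_cancel h
  apply (ascTail p k).injective
  rw [ascTail_apply hp, htail, ascTail_apply hq]

theorem ascFactorization_injective :
    Function.Injective fun p : {p : Fin n → Fin n // ∀ i, i ≤ p i} => ascFactorization p.1 := by
  rintro ⟨p, hp⟩ ⟨q, hq⟩ h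
  ext1
  funext k
  induction k using WellFoundedLT.induction with
  | _ k ih => exact apply_eq_of_ascFactorization_eq hp hq h ih

theorem card_subtype_forall_le_apply :
    Fintype.card {p : Fin n → Fin n // ∀ i, i ≤ p i} = n.factorial := by
  rw [Fintype.card_congr (Equiv.subtypePiEquivPi (p := fun i j => i ≤ j)), Fintype.card_pi]
  calc ∏ i : Fin n, Fintype.card {j : Fin n // i ≤ j}
      = ∏ i : Fin n, (n - (i : ℕ)) := Finset.prod_congr rfl fun i _ => by
        rw [Fintype.card_subtype, Finset.filter_le_eq_Ici, Fin.card_Ici]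
    _ = n.descFactorial n := by rw [Fin.prod_univ_eq_prod_range, Nat.descFactorial_eq_prod_range]
    _ = n.factorial := Nat.descFactorial_self n

end Factorization

/-- The number of sequences `(p_1,...,p_n)` with `i ≤ p_i ≤ n` equals `n!`,
and `(p_1,...,p_n) ↦ (n,...,p_n) ∘ ... ∘ (1,...,p_1)` is a bijection onto the symmetric
group on `[n]`. -/
theorem stmt4 (n : ℕ) :
    Fintype.card {p : Fin n → Fin n // ∀ i, i ≤ p i} = Nat.factorial n ∧
    Function.Bijective
      (fun p : {p : Fin n → Fin n // ∀ i, i ≤ p i} => ascFactorization p.1) := by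
  refine ⟨card_subtype_forall_le_apply, ?_⟩
  rw [Fintype.bijective_iff_injective_and_card, card_subtype_forall_le_apply, Fintype.card_perm,
    Fintype.card_fin]
  exact ⟨ascFactorization_injective, rfl⟩
end

section
/- Let σ = (σ_{ab})_{a≠b∈[d]} be a family of permutations of [n] indexed by ordered pairs of distinct elements of [d], with σ_{ba} the reverse of σ_{ab}. For distinct i,j ∈ [n], define the tournament G_{ij}(σ) on [d] with edge a→b iff i precedes j in σ_{ab}. Suppose all G_{ij}(σ) are acyclic. Define σ*_{ij} to be the permutation of [d] listing the vertices of G_{ij}(σ) in decreasing order of out-degree. Then for all distinct a,b ∈ [d] and distinct i,j ∈ [n]: i precedes j in σ_{ab} if and only if a precedes b in σ*_{ij}. -/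
/-!
Since `σ_{ba}` is the reverse of `σ_{ab}`, each `G_{ij}(σ)` is a tournament; an acyclic
tournament is transitive, hence a strict linear order, and out-degree is strictly decreasing
along its edges. So `a → b` iff `a` has the larger out-degree, i.e. iff `a` comes before `b`
in the listing `σ*_{ij}` by decreasing out-degree.
-/

open scoped Classical

/-- `i` precedes `j` in the permutation `u`, viewed as the word `u 0, u 1, ..., u (n-1)`. -/
def precedes {n : ℕ} (u : Equiv.Perm (Fin n)) (i j : Fin n) : Prop :=
  u.symm i < u.symm j

/-- A directed graph (relation) is acyclic: no directed cycle, i.e. no vertex reaches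
itself by a nonempty directed walk. -/
def IsAcyclicRel {d : ℕ} (r : Fin d → Fin d → Prop) : Prop :=
  ∀ a, ¬ Relation.TransGen r a a

/-- The tournament `G_{ij}(σ)` on `[d]`: `a → b` iff `i` precedes `j` in `σ_{ab}`. -/
def tournG {n d : ℕ} (σ : Fin d → Fin d → Equiv.Perm (Fin n)) (i j : Fin n)
    (a b : Fin d) : Prop :=
  a ≠ b ∧ precedes (σ a b) i j

/-- A system of permutations on the edges of `n·Δ_{d-1}`: a family `(σ_{ab})` of
permutations of `[n]` with `σ_{ba}` the reverse word of `σ_{ab}`. -/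
def IsSystem {n d : ℕ} (σ : Fin d → Fin d → Equiv.Perm (Fin n)) : Prop :=
  ∀ a b : Fin d, a ≠ b → ∀ k : Fin n, σ b a k = σ a b k.rev

/-- An acyclic system of permutations: all the tournaments `G_{ij}(σ)` are acyclic. -/
def IsAcyclicSystem {n d : ℕ} (σ : Fin d → Fin d → Equiv.Perm (Fin n)) : Prop :=
  IsSystem σ ∧ ∀ i j : Fin n, i ≠ j → IsAcyclicRel (tournG σ i j)

/-- `a` is the unique source (vertex with no incoming edge) of the digraph `r`. -/
def IsUniqueSource {d : ℕ} (r : Fin d → Fin d → Prop) (a : Fin d) : Prop :=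
  (∀ b, ¬ r b a) ∧ ∀ a', (∀ b, ¬ r b a') → a' = a

/-- Out-degree of a vertex in a digraph on `[d]`. -/
noncomputable def outdeg {d : ℕ} (r : Fin d → Fin d → Prop) (a : Fin d) : ℕ :=
  (Finset.univ.filter fun b => r a b).card

/-- `a`-th coordinate of the position of the `i`-th simplex of an acyclic system `σ`:
`x_a^i = |{ j ≠ i : a is the unique source of G_{ij}(σ) }|`. -/
noncomputable def simplexPos {n d : ℕ} (σ : Fin d → Fin d → Equiv.Perm (Fin n))
    (i : Fin n) (a : Fin d) : ℕ :=
  (Finset.univ.filter fun j : Fin n => j ≠ i ∧ IsUniqueSource (tournG σ i j) a).card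

/-- `τ` is the dual system `σ*` of `σ`: for `i ≠ j`, the word `τ i j` lists the vertices
of the tournament `G_{ij}(σ)` in decreasing order of out-degree. -/
def IsDualOf {n d : ℕ} (σ : Fin d → Fin d → Equiv.Perm (Fin n))
    (τ : Fin n → Fin n → Equiv.Perm (Fin d)) : Prop :=
  ∀ i j : Fin n, i ≠ j → ∀ k : Fin d,
    outdeg (tournG σ i j) (τ i j k) = d - 1 - (k : ℕ)

/-- The order-preserving injection `Fin (d-1) → Fin d` skipping `a`. -/
def liftIdx {d : ℕ} (a : Fin d) (b : Fin (d - 1)) : Fin d :=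
  if h : (b : ℕ) < (a : ℕ) then ⟨b, by have := a.isLt; omega⟩
  else ⟨(b : ℕ) + 1, by have := b.isLt; omega⟩

/-- `v` is the permutation (word) of `[n] ∖ {i}` obtained from `u` by deleting the letter
`i`, with the remaining letters relabelled order-preservingly by `liftIdx i`. -/
def IsDeletionOf {n : ℕ} (v : Equiv.Perm (Fin (n - 1))) (u : Equiv.Perm (Fin n))
    (i : Fin n) : Prop :=
  ∀ x y : Fin (n - 1), precedes v x y ↔ precedes u (liftIdx i x) (liftIdx i y)

lemma IsSystem.symm_apply_swap {n d : ℕ} {σ : Fin d → Fin d → Equiv.Perm (Fin n)}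
    (hs : IsSystem σ) {a b : Fin d} (hab : a ≠ b) (i : Fin n) :
    (σ b a).symm i = ((σ a b).symm i).rev :=
  (σ b a).symm_apply_eq.mpr <| by rw [hs a b hab, Fin.rev_rev, Equiv.apply_symm_apply]

lemma IsSystem.tournG_iff_not_tournG_swap {n d : ℕ} {σ : Fin d → Fin d → Equiv.Perm (Fin n)}
    (hs : IsSystem σ) {i j : Fin n} (hij : i ≠ j) {a b : Fin d} (hab : a ≠ b) :
    tournG σ i j a b ↔ ¬ tournG σ i j b a := by
  have hne : (σ a b).symm i ≠ (σ a b).symm j := (σ a b).symm.injective.ne hij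
  simp only [tournG, precedes, hs.symm_apply_swap hab, Fin.rev_lt_rev, hab, hab.symm,
    ne_eq, not_false_eq_true, true_and, not_lt]
  exact ⟨le_of_lt, fun h => lt_of_le_of_ne h hne⟩

lemma IsAcyclicRel.irrefl {d : ℕ} {r : Fin d → Fin d → Prop} (hr : IsAcyclicRel r) (a : Fin d) :
    ¬ r a a :=
  fun h => hr a (.single h)

lemma IsAcyclicRel.trans_of_total {d : ℕ} {r : Fin d → Fin d → Prop} (hr : IsAcyclicRel r)
    (htot : ∀ x y, x ≠ y → ¬ r y x → r x y) {x y z : Fin d} (hxy : r x y) (hyz : r y z) :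
    r x z := by
  have hxz : x ≠ z := by
    rintro rfl
    exact hr x (.head hxy (.single hyz))
  by_contra hnxz
  exact hr x (.head hxy (.head hyz (.single (htot z x hxz.symm hnxz))))

lemma outdeg_lt_outdeg_of_rel {d : ℕ} {r : Fin d → Fin d → Prop} (hirr : ∀ c, ¬ r c c)
    (htr : ∀ {x y z}, r x y → r y z → r x z) {a b : Fin d} (h : r a b) :
    outdeg r b < outdeg r a := by
  refine Finset.card_lt_card ⟨fun c hc => ?_, fun hsub => ?_⟩
  · simp only [Finset.mem_filter, Finset.mem_univ, true_and] at hc ⊢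
    exact htr h hc
  · have := hsub (Finset.mem_filter.mpr ⟨Finset.mem_univ b, h⟩)
    exact hirr b (Finset.mem_filter.mp this).2

lemma IsAcyclicRel.rel_iff_outdeg_lt {d : ℕ} {r : Fin d → Fin d → Prop} (hr : IsAcyclicRel r)
    (htot : ∀ x y, x ≠ y → ¬ r y x → r x y) {a b : Fin d} (hab : a ≠ b) :
    r a b ↔ outdeg r b < outdeg r a := by
  have hdecr : ∀ {x y}, r x y → outdeg r y < outdeg r x :=
    outdeg_lt_outdeg_of_rel hr.irrefl (hr.trans_of_total htot)
  refine ⟨hdecr, fun hlt => ?_⟩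
  by_contra hnab
  exact absurd (hdecr (htot b a hab.symm hnab)) (by omega)

lemma precedes_iff_lt_of_apply_eq_sub {d : ℕ} {τ : Equiv.Perm (Fin d)} {f : Fin d → ℕ}
    (hf : ∀ k, f (τ k) = d - 1 - k) {a b : Fin d} (hab : a ≠ b) :
    precedes τ a b ↔ f b < f a := by
  have hfa := hf (τ.symm a)
  have hfb := hf (τ.symm b)
  have hne : (τ.symm a : ℕ) ≠ τ.symm b := Fin.val_ne_of_ne (τ.symm.injective.ne hab)
  have hka := (τ.symm a).isLt
  have hkb := (τ.symm b).isLt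
  rw [Equiv.apply_symm_apply] at hfa hfb
  rw [precedes, Fin.lt_def, hfa, hfb]
  omega

/-- Let `σ` be a system of permutations of `[n]` with all tournaments
`G_{ij}(σ)` acyclic, and let `τ` with `τ i j` listing the vertices of `G_{ij}(σ)` by
decreasing out-degree (the dual system `σ*`).  Then `i` precedes `j` in `σ_{ab}` iff `a`
precedes `b` in `σ*_{ij}`. -/
theorem stmt7 (n d : ℕ) (σ : Fin d → Fin d → Equiv.Perm (Fin n))
    (hσ : IsAcyclicSystem σ)
    (τ : Fin n → Fin n → Equiv.Perm (Fin d)) (hτ : IsDualOf σ τ)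
    (a b : Fin d) (hab : a ≠ b) (i j : Fin n) (hij : i ≠ j) :
    precedes (σ a b) i j ↔ precedes (τ i j) a b := by
  obtain ⟨hs, hacyclic⟩ := hσ
  have htot : ∀ x y, x ≠ y → ¬ tournG σ i j y x → tournG σ i j x y :=
    fun _ _ hxy => (hs.tournG_iff_not_tournG_swap hij hxy).mpr
  calc precedes (σ a b) i j ↔ tournG σ i j a b := (and_iff_right hab).symm
    _ ↔ outdeg (tournG σ i j) b < outdeg (tournG σ i j) a :=
      (hacyclic i j hij).rel_iff_outdeg_lt htot hab
    _ ↔ precedes (τ i j) a b := (precedes_iff_lt_of_apply_eq_sub (hτ i j hij) hab).symm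
end

section
/- Let σ be an acyclic system of permutations on the edges of n·Δ_{d−1} and let a ∈ [d]. Define the contraction σ/a as the restriction of σ to the pairs (b,c) with b,c ∈ [d]∖{a}. Then σ/a is an acyclic system of permutations on the edges of n·Δ_{d−2}, and the duality identities (σ∖i)* = σ*/i and (σ/a)* = σ*∖a hold. -/
open scoped Classical

/-!
Restricting σ to the vertices `[d] ∖ {a}` restricts every tournament `G_{ij}(σ)` to an induced
subtournament, so acyclicity survives. Deleting the letter `i` does not change the relative order
of the other letters, so each tournament of `σ∖i` is the tournament of `σ` for the same two
letters, and the duals agree because a listing by decreasing out-degree is unique. For the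
contraction, deleting the vertex `a` lowers each out-degree by at most one; since the out-degrees
in an acyclic tournament are pairwise distinct, this preserves their strict order, which is the
deletion identity `(σ/a)* = σ*∖a`.
-/

open Finset

lemma liftIdx_injective {d : ℕ} (a : Fin d) : Function.Injective (liftIdx a) := by
  intro x y h
  unfold liftIdx at h
  split_ifs at h <;> simp only [Fin.mk.injEq] at h <;> exact Fin.ext (by omega)

lemma exists_liftIdx_eq {d : ℕ} {a c : Fin d} (h : c ≠ a) : ∃ y, liftIdx a y = c := by
  have hne : (c : ℕ) ≠ a := Fin.val_ne_of_ne h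
  by_cases hlt : (c : ℕ) < a
  · exact ⟨⟨c, by omega⟩, by simp [liftIdx, hlt]⟩
  · refine ⟨⟨c - 1, by omega⟩, ?_⟩
    simp only [liftIdx, dif_neg (show ¬ (c : ℕ) - 1 < a by omega)]
    exact Fin.ext (by simp only; omega)

lemma outdeg_comap_le {m e : ℕ} (r : Fin e → Fin e → Prop) {f : Fin m → Fin e}
    (hf : Function.Injective f) (z : Fin m) :
    outdeg (fun x y => r (f x) (f y)) z ≤ outdeg r (f z) :=
  card_le_card_of_injOn f (fun y hy => by simpa using hy) hf.injOn

lemma outdeg_le_outdeg_comap_liftIdx_add_one {e : ℕ} (r : Fin e → Fin e → Prop) (a : Fin e)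
    (z : Fin (e - 1)) :
    outdeg r (liftIdx a z) ≤ outdeg (fun x y => r (liftIdx a x) (liftIdx a y)) z + 1 := by
  have hsub : univ.filter (r (liftIdx a z)) ⊆
      insert a ((univ.filter fun y => r (liftIdx a z) (liftIdx a y)).image (liftIdx a)) := by
    intro c hc
    rcases eq_or_ne c a with rfl | hca
    · exact mem_insert_self _ _
    · obtain ⟨y, rfl⟩ := exists_liftIdx_eq hca
      exact mem_insert_of_mem (mem_image_of_mem _ (by simpa using hc))
  unfold outdeg
  convert (card_le_card hsub).trans ((card_insert_le _ _).trans
    (Nat.add_le_add_right card_image_le 1))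

lemma tournG_comap {n d m : ℕ} (σ : Fin d → Fin d → Equiv.Perm (Fin n)) {f : Fin m → Fin d}
    (hf : Function.Injective f) (i j : Fin n) :
    tournG (fun b c => σ (f b) (f c)) i j = fun x y => tournG σ i j (f x) (f y) := by
  ext x y
  simp only [tournG, hf.ne_iff]

lemma IsAcyclicSystem.comap {n d m : ℕ} {σ : Fin d → Fin d → Equiv.Perm (Fin n)}
    (hσ : IsAcyclicSystem σ) {f : Fin m → Fin d} (hf : Function.Injective f) :
    IsAcyclicSystem fun b c => σ (f b) (f c) := by
  refine ⟨fun b c hbc => hσ.1 _ _ (hf.ne hbc), fun i j hij x hx => ?_⟩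
  rw [tournG_comap σ hf] at hx
  exact hσ.2 i j hij _ (hx.lift f fun _ _ => id)

lemma tournG_eq_of_isDeletionOf {n d : ℕ} {σ : Fin d → Fin d → Equiv.Perm (Fin n)}
    {σd : Fin d → Fin d → Equiv.Perm (Fin (n - 1))} {i : Fin n}
    (hd : ∀ b c : Fin d, b ≠ c → IsDeletionOf (σd b c) (σ b c) i) (j k : Fin (n - 1)) :
    tournG σd j k = tournG σ (liftIdx i j) (liftIdx i k) := by
  ext b c
  exact and_congr_right fun hbc => hd b c hbc j k

def ListsByOutdeg {e : ℕ} (r : Fin e → Fin e → Prop) (t : Equiv.Perm (Fin e)) : Prop :=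
  ∀ k : Fin e, outdeg r (t k) = e - 1 - (k : ℕ)

namespace ListsByOutdeg

variable {e : ℕ} {r : Fin e → Fin e → Prop} {t : Equiv.Perm (Fin e)}

lemma outdeg_eq (ht : ListsByOutdeg r t) (u : Fin e) : outdeg r u = e - 1 - (t.symm u : ℕ) := by
  simpa using ht (t.symm u)

lemma precedes_iff (ht : ListsByOutdeg r t) (u v : Fin e) :
    precedes t u v ↔ outdeg r v < outdeg r u := by
  have := (t.symm u).isLt
  have := (t.symm v).isLt
  rw [precedes, Fin.lt_def, ht.outdeg_eq, ht.outdeg_eq]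
  omega

lemma outdeg_injective (ht : ListsByOutdeg r t) : Function.Injective (outdeg r) := by
  intro u v huv
  have := (t.symm u).isLt
  have := (t.symm v).isLt
  rw [ht.outdeg_eq, ht.outdeg_eq] at huv
  exact t.symm.injective (Fin.ext (by omega))

lemma unique {t' : Equiv.Perm (Fin e)} (ht : ListsByOutdeg r t) (ht' : ListsByOutdeg r t') :
    t = t' :=
  Equiv.ext fun k => ht.outdeg_injective (by rw [ht k, ht' k])

lemma isDeletionOf_comap_liftIdx {a : Fin e} {t' : Equiv.Perm (Fin (e - 1))}
    (ht : ListsByOutdeg r t) (ht' : ListsByOutdeg (fun x y => r (liftIdx a x) (liftIdx a y)) t') :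
    IsDeletionOf t' t a := by
  intro x y
  rw [ht'.precedes_iff, ht.precedes_iff]
  rcases eq_or_ne x y with rfl | hxy
  · simp
  have := ht'.outdeg_injective.ne hxy
  have := ht.outdeg_injective.ne ((liftIdx_injective a).ne hxy)
  have := outdeg_comap_le r (liftIdx_injective a) x
  have := outdeg_comap_le r (liftIdx_injective a) y
  have := outdeg_le_outdeg_comap_liftIdx_add_one r a x
  have := outdeg_le_outdeg_comap_liftIdx_add_one r a y
  omega

end ListsByOutdeg

/-- The contraction `σ/a` of an acyclic system of permutations on the
edges of `n·Δ_{d-1}` is an acyclic system of permutations on the edges of `n·Δ_{d-2}`,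
and the duality identities `(σ∖i)* = σ*/i` and `(σ/a)* = σ*∖a` hold. -/
theorem stmt10 (n d : ℕ) (σ : Fin d → Fin d → Equiv.Perm (Fin n))
    (hσ : IsAcyclicSystem σ) (a : Fin d) (i : Fin n)
    -- the contraction σ/a :
    (σc : Fin (d - 1) → Fin (d - 1) → Equiv.Perm (Fin n))
    (hc : ∀ b c : Fin (d - 1), σc b c = σ (liftIdx a b) (liftIdx a c))
    -- the dual σ* :
    (τ : Fin n → Fin n → Equiv.Perm (Fin d)) (hτ : IsDualOf σ τ)
    -- the deletion σ∖i :
    (σd : Fin d → Fin d → Equiv.Perm (Fin (n - 1)))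
    (hd : ∀ b c : Fin d, b ≠ c → IsDeletionOf (σd b c) (σ b c) i)
    -- the dual (σ∖i)* :
    (ρ : Fin (n - 1) → Fin (n - 1) → Equiv.Perm (Fin d)) (hρ : IsDualOf σd ρ)
    -- the dual (σ/a)* :
    (μ : Fin n → Fin n → Equiv.Perm (Fin (d - 1))) (hμ : IsDualOf σc μ) :
    IsAcyclicSystem σc ∧
    -- (σ∖i)* = σ*/i :
    (∀ j k : Fin (n - 1), j ≠ k → ρ j k = τ (liftIdx i j) (liftIdx i k)) ∧
    -- (σ/a)* = σ*∖a :
    (∀ j k : Fin n, j ≠ k → IsDeletionOf (μ j k) (τ j k) a) := by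
  obtain rfl : σc = fun b c => σ (liftIdx a b) (liftIdx a c) := funext₂ hc
  refine ⟨hσ.comap (liftIdx_injective a), fun j k hjk => ?_, fun j k hjk => ?_⟩
  · have hτjk : ListsByOutdeg (tournG σd j k) (τ (liftIdx i j) (liftIdx i k)) := by
      rw [tournG_eq_of_isDeletionOf hd]
      exact hτ _ _ ((liftIdx_injective i).ne hjk)
    exact ListsByOutdeg.unique (hρ j k hjk) hτjk
  · have hμjk : ListsByOutdeg (fun x y => tournG σ j k (liftIdx a x) (liftIdx a y)) (μ j k) := by
      rw [← tournG_comap σ (liftIdx_injective a)]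
      exact hμ j k hjk
    exact ListsByOutdeg.isDeletionOf_comap_liftIdx (hτ j k hjk) hμjk
end

section
/- There is a bijection between lozenge tilings of n·Δ_2 and vertex-disjoint routings in the directed graph G_n whose vertices are the lattice points {(x_1,x_2,x_3) ∈ ℤ^3_{≥0} : x_1+x_2+x_3 = n−1} with each non-bottom-row vertex connected to the two vertices directly below it, where a routing is a set of n vertex-disjoint directed paths ending at the n bottom vertices. -/
open scoped Classical

/-- Upward unit triangles of `n·Δ_2`: pairs `(r, c)` (row from the top, column) with
`c ≤ r ≤ n - 1`.  There are `n(n+1)/2` of them. -/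
abbrev UpT (n : ℕ) := {p : Fin n × Fin n // p.2 ≤ p.1}

/-- Downward unit triangles of `n·Δ_2`: pairs `(r, c)` with `c < r ≤ n - 1`.
There are `n(n-1)/2` of them. -/
abbrev DownT (n : ℕ) := {p : Fin n × Fin n // p.2 < p.1}

/-- The downward triangle `(r, c)` is adjacent (shares an edge) with exactly the three
upward triangles `(r, c)` (on its left), `(r, c+1)` (on its right) and `(r-1, c)`
(above it). -/
def AdjDU {n : ℕ} (dt : DownT n) (u : UpT n) : Prop :=
  ((u.1.1 : ℕ) = (dt.1.1 : ℕ) ∧ (u.1.2 : ℕ) = (dt.1.2 : ℕ)) ∨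
  ((u.1.1 : ℕ) = (dt.1.1 : ℕ) ∧ (u.1.2 : ℕ) = (dt.1.2 : ℕ) + 1) ∨
  ((u.1.1 : ℕ) + 1 = (dt.1.1 : ℕ) ∧ (u.1.2 : ℕ) = (dt.1.2 : ℕ))

/-- A lozenge tiling of `n·Δ_2`, encoded as an injective map pairing each downward unit
triangle with an adjacent upward unit triangle (forming the rhombi); the upward triangles
not paired with any downward triangle are the unit triangle tiles. -/
def IsLozengeTiling {n : ℕ} (f : DownT n → UpT n) : Prop :=
  Function.Injective f ∧ ∀ dt, AdjDU dt (f dt)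

/-- Vertices of the triangular-array graph `G_n`: lattice points
`(x₁, x₂, x₃) ∈ ℤ³_{≥0}` with `x₁ + x₂ + x₃ = n - 1`. -/
abbrev RVert (n : ℕ) := {x : Fin n × Fin n × Fin n // (x.1 : ℕ) + x.2.1 + x.2.2 = n - 1}

/-- Edges of `G_n`: from `(x₁, x₂, x₃)` with `x₁ > 0` to `(x₁-1, x₂+1, x₃)` and to
`(x₁-1, x₂, x₃+1)` (the two vertices directly below it; the bottom row is `x₁ = 0`). -/
def REdge {n : ℕ} (x y : RVert n) : Prop :=
  (y.1.1 : ℕ) + 1 = (x.1.1 : ℕ) ∧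
  (((y.1.2.1 : ℕ) = (x.1.2.1 : ℕ) + 1 ∧ (y.1.2.2 : ℕ) = (x.1.2.2 : ℕ)) ∨
   ((y.1.2.1 : ℕ) = (x.1.2.1 : ℕ) ∧ (y.1.2.2 : ℕ) = (x.1.2.2 : ℕ) + 1))

/-- A vertex-disjoint routing to the bottom row of `G_n`: a set `E` of edges of `G_n`
such that every vertex has at most one outgoing and at most one incoming edge of `E`
(so `E` decomposes into vertex-disjoint directed paths), and every non-bottom vertex
with an incoming edge has an outgoing edge (so every path ends at a bottom vertex;
there is one, possibly trivial, path ending at each of the `n` bottom vertices). -/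
def IsRouting {n : ℕ} (E : RVert n → RVert n → Prop) : Prop :=
  (∀ x y, E x y → REdge x y) ∧
  (∀ x y z, E x y → E x z → y = z) ∧
  (∀ x y z, E y x → E z x → y = z) ∧
  (∀ x, (x.1.1 : ℕ) ≠ 0 → (∃ y, E y x) → ∃ z, E x z)

/-!
On the non-bottom vertices, a routing is the same thing as an injective map `σ` that sends
each vertex either to itself or to one of its two children: `σ x` is the successor of `x` on
its path, or `x` itself when `x` has no outgoing edge (such an `x` is isolated, because a
non-bottom vertex that is entered is also left). Now read each vertex as an upward triangle
and each non-bottom vertex as the downward triangle just below it. The three upward triangles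
adjacent to that downward triangle are the vertex itself and its two children, so a lozenge
tiling, i.e. an injective choice of adjacent upward triangle for each downward one, is again
exactly such a map `σ`.
-/

section Routing

variable {V : Type*}

def IsRoutingOf (R : V → V → Prop) (active : V → Prop) (E : V → V → Prop) : Prop :=
  (∀ x y, E x y → R x y) ∧
  (∀ x y z, E x y → E x z → y = z) ∧
  (∀ x y z, E y x → E z x → y = z) ∧
  (∀ x, active x → (∃ y, E y x) → ∃ z, E x z)

def IsInjectiveMove (R : V → V → Prop) {active : V → Prop} (σ : {x // active x} → V) : Prop :=
  Function.Injective σ ∧ ∀ x, σ x = x ∨ R x (σ x)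

noncomputable def moveOfRouting (E : V → V → Prop) (x : V) : V :=
  if h : ∃ y, E x y then h.choose else x

def routingOfMove (R : V → V → Prop) {active : V → Prop} (σ : {x // active x} → V)
    (x y : V) : Prop :=
  R x y ∧ ∃ h : active x, σ ⟨x, h⟩ = y

variable {R : V → V → Prop} {active : V → Prop}

lemma moveOfRouting_eq_of_rel {E : V → V → Prop} (hE : IsRoutingOf R active E) {x y : V}
    (hxy : E x y) : moveOfRouting E x = y := by
  have h : ∃ y, E x y := ⟨y, hxy⟩
  rw [moveOfRouting, dif_pos h]
  exact hE.2.1 x _ y h.choose_spec hxy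

lemma moveOfRouting_eq_self {E : V → V → Prop} {x : V} (h : ¬∃ y, E x y) :
    moveOfRouting E x = x :=
  dif_neg h

lemma moveOfRouting_spec {E : V → V → Prop} {x : V} (h : ∃ y, E x y) :
    E x (moveOfRouting E x) := by
  rw [moveOfRouting, dif_pos h]
  exact h.choose_spec

lemma isInjectiveMove_moveOfRouting {E : V → V → Prop} (hE : IsRoutingOf R active E) :
    IsInjectiveMove R fun x : {x // active x} => moveOfRouting E x := by
  have moved_ne_stayed {x x' : {x // active x}} (hx : ∃ y, E x y) (hx' : ¬∃ y, E x' y)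
      (heq : moveOfRouting E x = moveOfRouting E x') : False := by
    have hxx' : E x x' := by simpa [heq, moveOfRouting_eq_self hx'] using moveOfRouting_spec hx
    exact hx' (hE.2.2.2 x' x'.2 ⟨x, hxx'⟩)
  refine ⟨fun x x' (heq : moveOfRouting E x = moveOfRouting E x') => ?_, fun x => ?_⟩
  · by_cases hx : ∃ y, E x y <;> by_cases hx' : ∃ y, E x' y
    · have hx'E : E x' (moveOfRouting E x) := heq ▸ moveOfRouting_spec hx'
      exact Subtype.ext (hE.2.2.1 _ _ _ (moveOfRouting_spec hx) hx'E)
    · exact (moved_ne_stayed hx hx' heq).elim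
    · exact (moved_ne_stayed hx' hx heq.symm).elim
    · exact Subtype.ext (by simpa [moveOfRouting_eq_self hx, moveOfRouting_eq_self hx'] using heq)
  · by_cases hx : ∃ y, E x y
    · exact .inr (hE.1 _ _ (moveOfRouting_spec hx))
    · exact .inl (moveOfRouting_eq_self hx)

lemma isRoutingOf_routingOfMove (hirr : ∀ x, ¬R x x) {σ : {x // active x} → V}
    (hσ : IsInjectiveMove R σ) : IsRoutingOf R active (routingOfMove R σ) := by
  refine ⟨fun x y h => h.1, ?_, ?_, ?_⟩
  · rintro x y z ⟨-, _, rfl⟩ ⟨-, _, rfl⟩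
    rfl
  · rintro x y z ⟨-, _, hyx⟩ ⟨-, _, hzx⟩
    exact congrArg Subtype.val (hσ.1 (hyx.trans hzx.symm))
  · rintro x hx ⟨y, hyx, hy, hσy⟩
    rcases hσ.2 ⟨x, hx⟩ with hstay | hmove
    · have : (⟨y, hy⟩ : {x // active x}) = ⟨x, hx⟩ := hσ.1 (hσy.trans hstay.symm)
      obtain rfl : y = x := congrArg Subtype.val this
      exact (hirr y hyx).elim
    · exact ⟨_, hmove, hx, rfl⟩

lemma routingOfMove_moveOfRouting (hR : ∀ x y, R x y → active x) (hirr : ∀ x, ¬R x x)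
    {E : V → V → Prop} (hE : IsRoutingOf R active E) :
    routingOfMove R (fun x : {x // active x} => moveOfRouting E x) = E := by
  ext x y
  constructor
  · rintro ⟨hxy, _, rfl⟩
    dsimp only at hxy ⊢
    by_cases hx : ∃ y, E x y
    · exact moveOfRouting_spec hx
    · rw [moveOfRouting_eq_self hx] at hxy
      exact (hirr x hxy).elim
  · intro hxy
    exact ⟨hE.1 x y hxy, hR x y (hE.1 x y hxy), moveOfRouting_eq_of_rel hE hxy⟩

lemma moveOfRouting_routingOfMove {σ : {x // active x} → V} (hσ : IsInjectiveMove R σ) :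
    (fun x : {x // active x} => moveOfRouting (routingOfMove R σ) x) = σ := by
  funext x
  by_cases h : ∃ y, routingOfMove R σ x y
  · exact (moveOfRouting_spec h).2.2.symm
  · rw [moveOfRouting_eq_self h]
    rcases hσ.2 x with hstay | hmove
    · exact hstay.symm
    · exact (h ⟨_, hmove, x.2, rfl⟩).elim

noncomputable def routingEquivInjectiveMove (hR : ∀ x y, R x y → active x)
    (hirr : ∀ x, ¬R x x) :
    {E // IsRoutingOf R active E} ≃ {σ : {x // active x} → V // IsInjectiveMove R σ} where
  toFun E := ⟨fun x => moveOfRouting E.1 x, isInjectiveMove_moveOfRouting E.2⟩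
  invFun σ := ⟨routingOfMove R σ.1, isRoutingOf_routingOfMove hirr σ.2⟩
  left_inv E := Subtype.ext (routingOfMove_moveOfRouting hR hirr E.2)
  right_inv σ := Subtype.ext (moveOfRouting_routingOfMove σ.2)

end Routing

section Geometry

variable {n : ℕ}

lemma rVert_eq_iff {x y : RVert n} :
    x = y ↔ (x.1.2.1 : ℕ) = y.1.2.1 ∧ (x.1.2.2 : ℕ) = y.1.2.2 := by
  refine ⟨by rintro rfl; simp, fun ⟨h₂, h₃⟩ => ?_⟩
  have hx := x.2
  have hy := y.2
  exact Subtype.ext (Prod.ext (Fin.ext (by omega)) (Prod.ext (Fin.ext h₂) (Fin.ext h₃)))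

lemma finPair_eq_iff {P : Fin n × Fin n → Prop} {u v : {p // P p}} :
    u = v ↔ (u.1.1 : ℕ) = v.1.1 ∧ (u.1.2 : ℕ) = v.1.2 := by
  simp [Subtype.ext_iff, Prod.ext_iff, Fin.ext_iff]

lemma REdge.fst_ne_zero {x y : RVert n} (h : REdge x y) : (x.1.1 : ℕ) ≠ 0 := by
  have := h.1
  omega

lemma REdge.irrefl (x : RVert n) : ¬REdge x x := by
  rintro ⟨h, -⟩
  omega

/-- The vertex `(x₁, x₂, x₃)` of `G_n` is the upward triangle in row `x₂ + x₃`, column `x₂`;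
when `x₁ ≠ 0`, the downward triangle just below it is in row `x₂ + x₃ + 1`, column `x₂`. -/
def upEquiv : RVert n ≃ UpT n where
  toFun y := ⟨(⟨y.1.2.1 + y.1.2.2, by have := y.2; omega⟩, y.1.2.1),
    Fin.le_def.mpr (by simp)⟩
  invFun u := ⟨(⟨n - 1 - u.1.1, by omega⟩, u.1.2, ⟨u.1.1 - u.1.2, by omega⟩), by
    have := Fin.le_def.mp u.2
    dsimp only
    omega⟩
  left_inv y := rVert_eq_iff.mpr ⟨rfl, by simp⟩
  right_inv u := finPair_eq_iff.mpr ⟨by have := Fin.le_def.mp u.2; dsimp only; omega, rfl⟩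

def downEquiv : {x : RVert n // (x.1.1 : ℕ) ≠ 0} ≃ DownT n where
  toFun x := ⟨(⟨x.1.1.2.1 + x.1.1.2.2 + 1, by have := x.1.2; have := x.2; omega⟩, x.1.1.2.1),
    Fin.lt_def.mpr (by simp)⟩
  invFun d := ⟨⟨(⟨n - d.1.1, by omega⟩, d.1.2, ⟨d.1.1 - 1 - d.1.2, by omega⟩), by
    have := Fin.lt_def.mp d.2
    dsimp only
    omega⟩, by dsimp only; omega⟩
  left_inv x := Subtype.ext (rVert_eq_iff.mpr ⟨rfl, by simp⟩)
  right_inv d := finPair_eq_iff.mpr ⟨by have := Fin.lt_def.mp d.2; dsimp only; omega, rfl⟩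

lemma adjDU_downEquiv_upEquiv_iff (x : {x : RVert n // (x.1.1 : ℕ) ≠ 0}) (y : RVert n) :
    AdjDU (downEquiv x) (upEquiv y) ↔ y = x ∨ REdge x y := by
  simp only [AdjDU, REdge, rVert_eq_iff, downEquiv, upEquiv, Equiv.coe_fn_mk]
  have := x.1.2
  have := x.2
  have := y.2
  omega

def tilingEquivInjectiveMove :
    {f : DownT n → UpT n // IsLozengeTiling f} ≃
      {σ : {x : RVert n // (x.1.1 : ℕ) ≠ 0} → RVert n // IsInjectiveMove REdge σ} :=
  ((Equiv.arrowCongr downEquiv upEquiv).subtypeEquiv fun σ =>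
    and_congr ((upEquiv.comp_injective _).trans (downEquiv.symm.injective_comp σ)).symm
      (downEquiv.forall_congr fun x => by
        simp only [Equiv.arrowCongr_apply, Function.comp_apply, Equiv.symm_apply_apply,
          adjDU_downEquiv_upEquiv_iff])).symm

end Geometry

/-- There is a bijection between the lozenge tilings of `n·Δ_2` and the
vertex-disjoint routings to the bottom row of the directed graph `G_n`. -/
theorem stmt15 (n : ℕ) :
    Nonempty ({f : DownT n → UpT n // IsLozengeTiling f} ≃
      {E : RVert n → RVert n → Prop // IsRouting E}) :=
  ⟨tilingEquivInjectiveMove.trans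
    (routingEquivInjectiveMove (R := REdge) (fun _ _ => REdge.fst_ne_zero) REdge.irrefl).symm⟩
end

section
/- Let σ be an acyclic system of permutations on the edges of n·Δ_{d−1}, and let T(σ) be its n×n table of positions: T_{ii} = the full word w_1...w_d, and for j ≠ i, T_{ij} = w_a where a is the unique source of G_{ij}(σ). For distinct a,b ∈ [d], define the directed graph H_{ab}(σ) on [n] with an edge i→j whenever there exists a column ℓ such that w_a appears in T_{iℓ} and w_b appears in T_{jℓ}. Then H_{ab}(σ) is a subgraph of the acyclic tournament on [n] corresponding to σ_{ab} (i.e., i→j in H_{ab}(σ) implies i precedes j in σ_{ab}); in particular, H_{ab}(σ) is acyclic. -/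
open scoped Classical

/-- The table of positions `T(σ)` of an acyclic system: the diagonal entry `T i i` is the
full word `w_1 ... w_d`, and for `j ≠ i` the entry `T i j` is the singleton consisting of
the unique source of `G_{ij}(σ)`. -/
noncomputable def tableT {n d : ℕ} (σ : Fin d → Fin d → Equiv.Perm (Fin n))
    (i j : Fin n) : Finset (Fin d) :=
  if i = j then Finset.univ else Finset.univ.filter (IsUniqueSource (tournG σ i j))

/-- The digraph `H_{ab}(σ)` on `[n]`: `i → j` (for `i ≠ j`) whenever there is a column `ℓ`
such that `w_a` appears in `T i ℓ` and `w_b` appears in `T j ℓ`. -/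
noncomputable def Hrel {n d : ℕ} (σ : Fin d → Fin d → Equiv.Perm (Fin n))
    (a b : Fin d) (i j : Fin n) : Prop :=
  i ≠ j ∧ ∃ ℓ : Fin n, a ∈ tableT σ i ℓ ∧ b ∈ tableT σ j ℓ

/-!
If `a` is the source of `G_{iℓ}(σ)` then `ℓ` does not precede `i` in `σ_{ba}`, i.e. (since
`σ_{ba}` is the reverse of `σ_{ab}`) `i` precedes `ℓ` in `σ_{ab}`; symmetrically, if `b` is the
source of `G_{jℓ}(σ)` then `ℓ` precedes `j` in `σ_{ab}`. An edge `i → j` of `H_{ab}(σ)` comes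
from a column `ℓ`, and chaining the two facts through `ℓ` (only one of them is needed when
`ℓ ∈ {i, j}`) gives that `i` precedes `j` in `σ_{ab}`. A subrelation of a strict order is acyclic.
-/

section Precedes

variable {n : ℕ} (u : Equiv.Perm (Fin n))

lemma precedes_trans {i j k : Fin n} (hij : precedes u i j) (hjk : precedes u j k) :
    precedes u i k :=
  lt_trans hij hjk

lemma precedes_of_not_precedes {i j : Fin n} (hij : i ≠ j) (h : ¬ precedes u j i) :
    precedes u i j :=
  lt_of_le_of_ne (not_lt.mp h) (u.symm.injective.ne hij)

lemma isAcyclicRel_of_le_precedes {r : Fin n → Fin n → Prop}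
    (hr : ∀ i j, r i j → precedes u i j) : IsAcyclicRel r := by
  have hgen : ∀ {i j}, Relation.TransGen r i j → precedes u i j := by
    intro i j h
    induction h with
    | single h => exact hr _ _ h
    | tail _ h ih => exact precedes_trans u ih (hr _ _ h)
  exact fun i hi => lt_irrefl _ (hgen hi)

end Precedes

section Table

variable {n d : ℕ} {σ : Fin d → Fin d → Equiv.Perm (Fin n)}

lemma IsSystem.precedes_swap_iff (hs : IsSystem σ) {a b : Fin d} (hab : a ≠ b) (i j : Fin n) :
    precedes (σ b a) i j ↔ precedes (σ a b) j i := by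
  have hsymm : ∀ x, (σ b a).symm x = ((σ a b).symm x).rev := fun x =>
    (Equiv.symm_apply_eq _).mpr <| by rw [hs a b hab, Fin.rev_rev, Equiv.apply_symm_apply]
  simp only [precedes, hsymm, Fin.rev_lt_rev]

lemma not_tournG_of_mem_tableT {i ℓ : Fin n} (hiℓ : i ≠ ℓ) {a : Fin d}
    (ha : a ∈ tableT σ i ℓ) (c : Fin d) : ¬ tournG σ i ℓ c a := by
  rw [tableT, if_neg hiℓ, Finset.mem_filter] at ha
  exact ha.2.1 c

lemma IsSystem.precedes_of_mem_tableT_left (hs : IsSystem σ) {a b : Fin d} (hab : a ≠ b)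
    {i ℓ : Fin n} (hiℓ : i ≠ ℓ) (ha : a ∈ tableT σ i ℓ) : precedes (σ a b) i ℓ := by
  refine precedes_of_not_precedes _ hiℓ fun hℓi => not_tournG_of_mem_tableT hiℓ ha b ?_
  exact ⟨hab.symm, (hs.precedes_swap_iff hab i ℓ).mpr hℓi⟩

lemma precedes_of_mem_tableT_right {a b : Fin d} (hab : a ≠ b)
    {j ℓ : Fin n} (hjℓ : j ≠ ℓ) (hb : b ∈ tableT σ j ℓ) : precedes (σ a b) ℓ j :=
  precedes_of_not_precedes _ hjℓ.symm fun hjℓ' => not_tournG_of_mem_tableT hjℓ hb a ⟨hab, hjℓ'⟩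

lemma IsSystem.precedes_of_hrel (hs : IsSystem σ) {a b : Fin d} (hab : a ≠ b) {i j : Fin n}
    (h : Hrel σ a b i j) : precedes (σ a b) i j := by
  obtain ⟨hij, ℓ, ha, hb⟩ := h
  by_cases hiℓ : i = ℓ
  · subst hiℓ
    exact precedes_of_mem_tableT_right hab (Ne.symm hij) hb
  by_cases hjℓ : j = ℓ
  · subst hjℓ
    exact hs.precedes_of_mem_tableT_left hab hij ha
  exact precedes_trans _ (hs.precedes_of_mem_tableT_left hab hiℓ ha)
    (precedes_of_mem_tableT_right hab hjℓ hb)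

end Table

/-- For an acyclic system of permutations `σ` and distinct `a, b ∈ [d]`,
the digraph `H_{ab}(σ)` is a subgraph of the acyclic tournament on `[n]` corresponding to
`σ_{ab}`: an edge `i → j` of `H_{ab}(σ)` implies that `i` precedes `j` in `σ_{ab}`.
In particular `H_{ab}(σ)` is acyclic. -/
theorem stmt17 (n d : ℕ) (σ : Fin d → Fin d → Equiv.Perm (Fin n))
    (hσ : IsAcyclicSystem σ) (a b : Fin d) (hab : a ≠ b) :
    (∀ i j : Fin n, Hrel σ a b i j → precedes (σ a b) i j) ∧
    IsAcyclicRel (Hrel σ a b) := by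
  have hH : ∀ i j : Fin n, Hrel σ a b i j → precedes (σ a b) i j :=
    fun _ _ => hσ.1.precedes_of_hrel hab
  exact ⟨hH, isAcyclicRel_of_le_precedes _ hH⟩
end

section
/- Every collection of three spread out simplex positions in 3·Δ_{d−1} is achievable as the set of simplex positions of some acyclic system of permutations on the edges of 3·Δ_{d−1}. -/
/-!
With three simplices, a system is given by three rankings `r₀₁, r₀₂, r₁₂` of `[d]`: for `i < j`
the word `σ_{ab}` puts `i` before `j` iff `a` is above `b` in `r_{ij}`. This is a word on
`{0, 1, 2}` as soon as `r₀₂` ranks `a` above `b` whenever both `r₀₁` and `r₁₂` do; the tournaments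
`G_{ij}` are then the rankings themselves (`G_{ji}` reversed), hence acyclic, and their unique
sources are the tops and bottoms. So simplex 0 sits at `top r₀₁ + top r₀₂`, simplex 1 at
`bot r₀₁ + top r₁₂` and simplex 2 at `bot r₀₂ + bot r₁₂`.

Spreadness says that the three positions are distinct pairs with no vertex common to all three.
Choose `r₀₁` and `r₁₂` almost opposite, agreeing only on the two forced pairs
`(top r₀₁, bot r₁₂)` and `(top r₁₂, bot r₀₁)`; then `r₀₂` may have any top and bottom that do not
contradict these two pairs. It remains to assign the positions to the simplices and the roles
within each pair: if two positions share a vertex `v`, make them simplices 0 and 2 with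
`v = top r₀₁ = bot r₁₂`; otherwise the pairs are disjoint and any assignment works.
-/
open scoped Classical

def pairPos {d : ℕ} (a b : Fin d) : Fin d → ℕ := Pi.single a 1 + Pi.single b 1

section Pairs

variable {d : ℕ}

lemma pairPos_comm (a b : Fin d) : pairPos a b = pairPos b a := add_comm _ _

lemma pairPos_eq_zero_iff {a b y : Fin d} : pairPos a b y = 0 ↔ y ≠ a ∧ y ≠ b := by
  simp [pairPos, Pi.single_apply]

lemma exists_eq_pi_single_of_sum_eq_one {g : Fin d → ℕ} (h : ∑ a, g a = 1) :
    ∃ q, g = Pi.single q 1 := by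
  obtain ⟨q, hq⟩ := (Finsupp.sum_eq_one_iff (Finsupp.equivFunOnFinite.symm g)).mp
    (by simpa [Finsupp.sum_fintype] using h)
  exact ⟨q, by simpa using congrArg Finsupp.equivFunOnFinite hq⟩

lemma exists_eq_pairPos_of_ne_zero {f : Fin d → ℕ} (hf : ∑ a, f a = 2) {v : Fin d}
    (hv : f v ≠ 0) : ∃ w, f = pairPos v w := by
  have hle : Pi.single v 1 ≤ f := fun a => by
    by_cases ha : a = v
    · subst ha; simpa [Nat.one_le_iff_ne_zero] using hv
    · simp [ha]
  have hsplit : f = Pi.single v 1 + (f - Pi.single v 1) := (add_tsub_cancel_of_le hle).symm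
  obtain ⟨w, hw⟩ : ∃ w, f - Pi.single v 1 = Pi.single w 1 := by
    refine exists_eq_pi_single_of_sum_eq_one ?_
    have := congrArg (fun g : Fin d → ℕ => ∑ a, g a) hsplit
    simp only [Pi.add_apply, Finset.sum_add_distrib, Finset.sum_pi_single', Finset.mem_univ,
      if_true] at this
    omega
  exact ⟨w, hsplit.trans (by rw [hw]; rfl)⟩

lemma exists_eq_pairPos {f : Fin d → ℕ} (hf : ∑ a, f a = 2) : ∃ v w, f = pairPos v w := by
  obtain ⟨v, -, hv⟩ := Finset.exists_ne_zero_of_sum_ne_zero (hf.trans_ne two_ne_zero)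
  exact ⟨v, exists_eq_pairPos_of_ne_zero hf hv⟩

end Pairs

section Spread

variable {n d : ℕ}

def SpreadOut (x : Fin n → Fin d → ℕ) : Prop :=
  ∀ (m : Fin d → ℕ) (k : ℕ), (∑ a : Fin d, m a) + k = n →
    (Finset.univ.filter fun i : Fin n => ∀ a : Fin d, m a ≤ x i a).card ≤ k

variable {x : Fin n → Fin d → ℕ}

lemma SpreadOut.injective (hx : SpreadOut x) (hsum : ∀ i, (∑ a, x i a) + 1 = n) :
    Function.Injective x := by
  intro i j hij
  by_contra hne
  have hpair : ({i, j} : Finset (Fin n)) ⊆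
      Finset.univ.filter fun k => ∀ a, x i a ≤ x k a := by
    intro k hk
    rcases Finset.mem_insert.mp hk with rfl | hk
    · simp
    · simp [Finset.mem_singleton.mp hk, hij]
  have := (Finset.card_le_card hpair).trans (hx (x i) 1 (hsum i))
  rw [Finset.card_pair hne] at this
  omega

lemma SpreadOut.exists_eq_zero (hx : SpreadOut x) (hn : 1 ≤ n) (t : Fin d) :
    ∃ i, x i t = 0 := by
  by_contra! hpos
  have hall : (Finset.univ.filter fun i : Fin n =>
      ∀ a, (Pi.single t 1 : Fin d → ℕ) a ≤ x i a) = .univ := by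
    ext i
    simp only [Finset.mem_filter, Finset.mem_univ, true_and, iff_true]
    intro a
    by_cases ha : a = t
    · subst ha; simpa [Nat.one_le_iff_ne_zero] using hpos i
    · simp [ha]
  have := hx (Pi.single t 1) (n - 1) (by
    simp only [Finset.sum_pi_single', Finset.mem_univ, if_true]; omega)
  rw [hall, Finset.card_univ, Fintype.card_fin] at this
  omega

end Spread

lemma isAcyclicRel_of_rank {d : ℕ} {β : Type*} [Preorder β] {r : Fin d → Fin d → Prop}
    (f : Fin d → β) (hf : ∀ a b, r a b → f b < f a) : IsAcyclicRel r := by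
  intro a ha
  have key : ∀ x y, Relation.TransGen r x y → f y < f x := by
    intro x y hxy
    induction hxy with
    | single h => exact hf _ _ h
    | tail _ h ih => exact (hf _ _ h).trans ih
  exact lt_irrefl _ (key a a ha)

lemma IsAcyclicRel.swap {d : ℕ} {r : Fin d → Fin d → Prop} (hr : IsAcyclicRel r) :
    IsAcyclicRel (Function.swap r) :=
  fun a ha => hr a (Relation.transGen_swap.mp ha)

lemma isUniqueSource_iff_of_rank {d : ℕ} {β : Type*} [Preorder β] {r : Fin d → Fin d → Prop}
    {f : Fin d → β} {M : Fin d} (hr : ∀ a b, r a b ↔ a ≠ b ∧ f b < f a)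
    (hM : ∀ y, y ≠ M → f y < f M) (a : Fin d) : IsUniqueSource r a ↔ a = M := by
  have hsrc : ∀ b, ¬ r b M := fun b hb =>
    lt_asymm ((hr b M).mp hb).2 (hM b ((hr b M).mp hb).1)
  refine ⟨fun ha => (ha.2 M hsrc).symm, ?_⟩
  rintro rfl
  refine ⟨hsrc, fun a' ha' => ?_⟩
  by_contra hne
  exact ha' a ((hr a a').mpr ⟨Ne.symm hne, hM a' hne⟩)

section Systems

variable {n d : ℕ} {σ : Fin d → Fin d → Equiv.Perm (Fin n)}

lemma IsSystem.symm_apply (hσ : IsSystem σ) {a b : Fin d} (hab : a ≠ b) (i : Fin n) :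
    (σ b a).symm i = ((σ a b).symm i).rev := by
  rw [Equiv.symm_apply_eq, hσ a b hab, Fin.rev_rev, Equiv.apply_symm_apply]

lemma IsSystem.tournG_swap (hσ : IsSystem σ) (i j : Fin n) :
    tournG σ j i = Function.swap (tournG σ i j) := by
  ext a b
  simp only [tournG, precedes, Function.swap]
  rw [ne_comm (a := b)]
  refine and_congr_right fun hab => ?_
  rw [hσ.symm_apply hab, hσ.symm_apply hab, Fin.rev_lt_rev]

lemma IsSystem.isUniqueSource_iff (hσ : IsSystem σ) {i j : Fin n} {f : Fin d → ℤ}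
    (hf : ∀ a b, tournG σ i j a b ↔ a ≠ b ∧ f b < f a) {M m : Fin d}
    (hM : ∀ y, y ≠ M → f y < f M) (hm : ∀ y, y ≠ m → f m < f y) (a : Fin d) :
    (IsUniqueSource (tournG σ i j) a ↔ a = M) ∧ (IsUniqueSource (tournG σ j i) a ↔ a = m) := by
  refine ⟨isUniqueSource_iff_of_rank hf hM a, isUniqueSource_iff_of_rank (f := fun y => -f y)
    (fun a b => ?_) (fun y hy => neg_lt_neg (hm y hy)) a⟩
  rw [hσ.tournG_swap, Function.swap, hf, ne_comm, neg_lt_neg_iff]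

end Systems

/-- The flags say whether `0 ≺ 1`, `0 ≺ 2`, `1 ≺ 2`. The two cyclic flag patterns get arbitrary
words, chosen so that `word3_not` holds for all flags. -/
def word3 : Bool → Bool → Bool → Equiv.Perm (Fin 3)
  | true, true, true => 1
  | true, true, false => Equiv.swap 1 2
  | false, true, true => Equiv.swap 0 1
  | false, false, true => finRotate 3
  | true, false, false => (finRotate 3).symm
  | false, false, false => Equiv.swap 0 2
  | true, false, true => 1
  | false, true, false => Equiv.swap 0 2

lemma word3_not (p q r : Bool) (k : Fin 3) : word3 (!p) (!q) (!r) k = word3 p q r k.rev := by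
  revert p q r k; decide

lemma precedes_word3_zero_one (p q r : Bool) : precedes (word3 p q r) 0 1 ↔ p := by
  revert p q r; unfold precedes; decide

lemma precedes_word3_zero_two {p q r : Bool} (h : p → r → q) (h' : q → p ∨ r) :
    precedes (word3 p q r) 0 2 ↔ q := by
  revert p q r; unfold precedes; decide

lemma precedes_word3_one_two {p q r : Bool} (h : p → r → q) (h' : q → p ∨ r) :
    precedes (word3 p q r) 1 2 ↔ r := by
  revert p q r; unfold precedes; decide

section Ranks

variable {d : ℕ} {r01 r02 r12 : Fin d → ℤ}

structure CompatibleRanks (r01 r02 r12 : Fin d → ℤ) : Prop where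
  injective01 : Function.Injective r01
  injective02 : Function.Injective r02
  injective12 : Function.Injective r12
  compat : ∀ a b, r01 b < r01 a → r12 b < r12 a → r02 b < r02 a

def sysOfRanks (r01 r02 r12 : Fin d → ℤ) (a b : Fin d) : Equiv.Perm (Fin 3) :=
  word3 (r01 b < r01 a) (r02 b < r02 a) (r12 b < r12 a)

lemma decide_lt_eq_not {f : Fin d → ℤ} (hf : Function.Injective f) {a b : Fin d} (hab : a ≠ b) :
    decide (f a < f b) = !decide (f b < f a) := by
  rcases (hf.ne hab).lt_or_gt with h | h <;> simp [h, h.le]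

lemma CompatibleRanks.compat_rev (h : CompatibleRanks r01 r02 r12) {a b : Fin d} (hab : a ≠ b)
    (h02 : r02 b < r02 a) : r01 b < r01 a ∨ r12 b < r12 a := by
  by_contra! hle
  exact (h.compat b a ((hle.1).lt_of_ne (h.injective01.ne hab))
    ((hle.2).lt_of_ne (h.injective12.ne hab))).not_gt h02

lemma tournG_sysOfRanks_zero_one (a b : Fin d) :
    tournG (sysOfRanks r01 r02 r12) 0 1 a b ↔ a ≠ b ∧ r01 b < r01 a := by
  simp [tournG, sysOfRanks, precedes_word3_zero_one]

lemma CompatibleRanks.tournG_zero_two (h : CompatibleRanks r01 r02 r12) (a b : Fin d) :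
    tournG (sysOfRanks r01 r02 r12) 0 2 a b ↔ a ≠ b ∧ r02 b < r02 a := by
  refine and_congr_right fun hab => ?_
  exact (precedes_word3_zero_two (p := decide (r01 b < r01 a)) (q := decide (r02 b < r02 a))
    (r := decide (r12 b < r12 a)) (by simpa using h.compat a b)
    (by simpa using h.compat_rev hab)).trans decide_eq_true_iff

lemma CompatibleRanks.tournG_one_two (h : CompatibleRanks r01 r02 r12) (a b : Fin d) :
    tournG (sysOfRanks r01 r02 r12) 1 2 a b ↔ a ≠ b ∧ r12 b < r12 a := by
  refine and_congr_right fun hab => ?_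
  exact (precedes_word3_one_two (p := decide (r01 b < r01 a)) (q := decide (r02 b < r02 a))
    (r := decide (r12 b < r12 a)) (by simpa using h.compat a b)
    (by simpa using h.compat_rev hab)).trans decide_eq_true_iff

lemma CompatibleRanks.isSystem (h : CompatibleRanks r01 r02 r12) :
    IsSystem (sysOfRanks r01 r02 r12) := by
  intro a b hab k
  simp only [sysOfRanks, decide_lt_eq_not h.injective01 hab, decide_lt_eq_not h.injective02 hab,
    decide_lt_eq_not h.injective12 hab, word3_not]

lemma CompatibleRanks.isAcyclicSystem (h : CompatibleRanks r01 r02 r12) :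
    IsAcyclicSystem (sysOfRanks r01 r02 r12) := by
  have hσ := h.isSystem
  have h01 : IsAcyclicRel (tournG (sysOfRanks r01 r02 r12) 0 1) :=
    isAcyclicRel_of_rank r01 fun a b hab => ((tournG_sysOfRanks_zero_one a b).mp hab).2
  have h02 : IsAcyclicRel (tournG (sysOfRanks r01 r02 r12) 0 2) :=
    isAcyclicRel_of_rank r02 fun a b hab => ((h.tournG_zero_two a b).mp hab).2
  have h12 : IsAcyclicRel (tournG (sysOfRanks r01 r02 r12) 1 2) :=
    isAcyclicRel_of_rank r12 fun a b hab => ((h.tournG_one_two a b).mp hab).2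
  refine ⟨hσ, fun i j hij => ?_⟩
  fin_cases i <;> fin_cases j
  all_goals first
    | exact absurd rfl hij
    | assumption
    | (rw [hσ.tournG_swap]; exact IsAcyclicRel.swap ‹_›)

lemma CompatibleRanks.simplexPos_eq (h : CompatibleRanks r01 r02 r12) {A B C E F G : Fin d}
    (hA : ∀ y, y ≠ A → r01 y < r01 A) (hC : ∀ y, y ≠ C → r01 C < r01 y)
    (hB : ∀ y, y ≠ B → r02 y < r02 B) (hF : ∀ y, y ≠ F → r02 F < r02 y)
    (hE : ∀ y, y ≠ E → r12 y < r12 E) (hG : ∀ y, y ≠ G → r12 G < r12 y) :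
    simplexPos (sysOfRanks r01 r02 r12) 0 = pairPos A B ∧
      simplexPos (sysOfRanks r01 r02 r12) 1 = pairPos C E ∧
      simplexPos (sysOfRanks r01 r02 r12) 2 = pairPos F G := by
  have hσ := h.isSystem
  have s01 := hσ.isUniqueSource_iff tournG_sysOfRanks_zero_one hA hC
  have s02 := hσ.isUniqueSource_iff h.tournG_zero_two hB hF
  have s12 := hσ.isUniqueSource_iff h.tournG_one_two hE hG
  refine ⟨?_, ?_, ?_⟩ <;> ext a <;>
    simp only [simplexPos, Finset.card_filter, Fin.sum_univ_three, (s01 a).1, (s01 a).2,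
      (s02 a).1, (s02 a).2, (s12 a).1, (s12 a).2] <;>
    simp [pairPos, Pi.single_apply]

end Ranks

section Raise

variable {α : Type*} [DecidableEq α]

def raise (t b : α) (M : ℤ) (h : α → ℤ) (y : α) : ℤ :=
  if y = t then M else if y = b then -M else h y

variable {t b : α} {M : ℤ} {h : α → ℤ}

lemma abs_raise_lt (hh : ∀ y, |h y| < M) {M' : ℤ} (hM : M < M') (y : α) :
    |raise t b M h y| < M' := by
  have := hh y
  rw [abs_lt] at *
  unfold raise
  split_ifs <;> constructor <;> linarith [abs_nonneg (h y)]

lemma raise_lt_raise_top (hh : ∀ y, |h y| < M) {y : α} (hy : y ≠ t) :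
    raise t b M h y < raise t b M h t := by
  have := hh y
  rw [abs_lt] at this
  simp only [raise, if_neg hy]
  split_ifs <;> linarith

lemma raise_bot_lt_raise (hh : ∀ y, |h y| < M) (htb : t ≠ b) {y : α} (hy : y ≠ b) :
    raise t b M h b < raise t b M h y := by
  have := hh y
  rw [abs_lt] at this
  simp only [raise, if_neg htb.symm, if_neg hy]
  split_ifs <;> linarith

lemma raise_injective (hh : ∀ y, |h y| < M) (hinj : Function.Injective h) :
    Function.Injective (raise t b M h) := by
  intro y z hyz
  have hy := hh y
  have hz := hh z
  rw [abs_lt] at hy hz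
  have := @hinj y z
  unfold raise at hyz
  split_ifs at hyz <;> grind

end Raise

section SpecificRanks

variable {d : ℕ}

def idx (y : Fin d) : ℤ := (y : ℕ)

lemma abs_idx_lt (y : Fin d) : |idx y| < d := by
  rw [idx, Nat.abs_cast]; exact_mod_cast y.isLt

lemma idx_injective : Function.Injective (idx (d := d)) :=
  Nat.cast_injective.comp Fin.val_injective

lemma abs_raise_idx_lt (t b y : Fin d) : |raise t b d idx y| < d + 1 :=
  abs_raise_lt abs_idx_lt (lt_add_one _) y

lemma abs_raise_neg_idx_lt (t b y : Fin d) : |raise t b d (-idx) y| < d + 1 :=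
  abs_raise_lt (fun y => by simpa using abs_idx_lt y) (lt_add_one _) y

lemma abs_raise_raise_idx_lt (t b t' b' y : Fin d) :
    |raise t b (d + 1) (raise t' b' d idx) y| < d + 2 :=
  abs_raise_lt (abs_raise_idx_lt t' b') (by linarith) y

variable (A B C E F G : Fin d)

/- `rank01` orders `A ≻ G ≻ rest ≻ E ≻ C` and `rank12` orders `E ≻ C ≻ rest reversed ≻ A ≻ G`,
so they agree only on the pairs `(A, G)` and `(E, C)`; `rank02` orders
`B ≻ A ≻ E ≻ rest ≻ G ≻ C ≻ F`. -/
def rank01 : Fin d → ℤ := raise A C (d + 1) (raise G E d idx)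

def rank12 : Fin d → ℤ := raise E G (d + 1) (raise C A d (-idx))

def rank02 : Fin d → ℤ := raise B F (d + 2) (raise A C (d + 1) (raise E G d idx))

variable {A B C E F G}

lemma eq_of_rank01_lt_of_rank12_lt (hAC : A ≠ C) (hEG : E ≠ G) (hAE : A ≠ E) (hCG : C ≠ G)
    {a b : Fin d} (h01 : rank01 A C E G b < rank01 A C E G a)
    (h12 : rank12 A C E G b < rank12 A C E G a) :
    (a = A ∧ b = G) ∨ (a = E ∧ b = C) := by
  have := a.isLt
  have := b.isLt
  have hval : (a : ℕ) = b → a = b := Fin.ext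
  simp only [rank01, rank12, raise, idx, Pi.neg_apply] at h01 h12
  grind

/-- In the system built from `rank01`, `rank02`, `rank12`, simplex 0 is at `A + B`, simplex 1 at
`C + E` and simplex 2 at `F + G`. -/
structure Admissible (A B C E F G : Fin d) : Prop where
  ne_AC : A ≠ C
  ne_EG : E ≠ G
  ne_BF : B ≠ F
  ne_AE : A ≠ E
  ne_CG : C ≠ G
  of_ne_AG : A ≠ G → B ≠ G ∧ F ≠ A
  of_ne_EC : E ≠ C → B ≠ C ∧ F ≠ E

lemma Admissible.rank02_lt_of_dominance (h : Admissible A B C E F G) {a b : Fin d} (hab : a ≠ b)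
    (hdom : (a = A ∧ b = G) ∨ (a = E ∧ b = C)) :
    rank02 A B C E F G b < rank02 A B C E F G a := by
  obtain ⟨hAC, hEG, hBF, hAE, hCG, hAG, hEC⟩ := h
  have := a.isLt
  have := b.isLt
  simp only [rank02, raise, idx]
  grind

lemma Admissible.compatibleRanks (h : Admissible A B C E F G) :
    CompatibleRanks (rank01 A C E G) (rank02 A B C E F G) (rank12 A C E G) where
  injective01 := raise_injective (abs_raise_idx_lt G E) (raise_injective abs_idx_lt idx_injective)
  injective02 := raise_injective (abs_raise_raise_idx_lt A C E G)
    (raise_injective (abs_raise_idx_lt E G) (raise_injective abs_idx_lt idx_injective))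
  injective12 := raise_injective (abs_raise_neg_idx_lt C A)
    (raise_injective (fun y => by simpa using abs_idx_lt y) (neg_injective.comp idx_injective))
  compat a b h01 h12 := h.rank02_lt_of_dominance (fun hab => (hab ▸ h01).false)
    (eq_of_rank01_lt_of_rank12_lt h.ne_AC h.ne_EG h.ne_AE h.ne_CG h01 h12)

lemma Admissible.exists_isAcyclicSystem (h : Admissible A B C E F G) :
    ∃ σ : Fin d → Fin d → Equiv.Perm (Fin 3), IsAcyclicSystem σ ∧
      simplexPos σ 0 = pairPos A B ∧ simplexPos σ 1 = pairPos C E ∧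
      simplexPos σ 2 = pairPos F G :=
  ⟨_, h.compatibleRanks.isAcyclicSystem, h.compatibleRanks.simplexPos_eq
    (fun _ => raise_lt_raise_top (abs_raise_idx_lt G E))
    (fun _ => raise_bot_lt_raise (abs_raise_idx_lt G E) h.ne_AC)
    (fun _ => raise_lt_raise_top (abs_raise_raise_idx_lt A C E G))
    (fun _ => raise_bot_lt_raise (abs_raise_raise_idx_lt A C E G) h.ne_BF)
    (fun _ => raise_lt_raise_top (abs_raise_neg_idx_lt C A))
    (fun _ => raise_bot_lt_raise (abs_raise_neg_idx_lt C A) h.ne_EG)⟩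

lemma Admissible.of_disjoint (h01 : ∀ y, pairPos A B y = 0 ∨ pairPos C E y = 0)
    (h02 : ∀ y, pairPos A B y = 0 ∨ pairPos F G y = 0)
    (h12 : ∀ y, pairPos C E y = 0 ∨ pairPos F G y = 0) : Admissible A B C E F G := by
  simp only [pairPos_eq_zero_iff] at h01 h02 h12
  have := h01 A; have := h01 B; have := h02 A; have := h02 B; have := h12 C; have := h12 E
  constructor <;> grind

end SpecificRanks

lemma exists_admissible_of_common {d : ℕ} {v B F c e : Fin d} (hBF : B ≠ F) (hc : c ≠ v)
    (he : e ≠ v) : ∃ C E, Admissible v B C E F v ∧ pairPos c e = pairPos C E := by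
  by_cases h : B ≠ c ∧ F ≠ e
  · exact ⟨c, e, ⟨hc.symm, he, hBF, he.symm, hc, by simp, fun _ => h⟩, rfl⟩
  · refine ⟨e, c, ⟨he.symm, hc, hBF, hc.symm, he, by simp, fun hce => ?_⟩, pairPos_comm c e⟩
    grind

lemma exists_perm_fin_three :
    ∀ i j : Fin 3, i ≠ j → ∃ ρ : Equiv.Perm (Fin 3), ρ 0 = i ∧ ρ 2 = j := by
  decide

lemma exists_admissible_labeling {d : ℕ} {x : Fin 3 → Fin d → ℕ} (hsum : ∀ i, ∑ a, x i a = 2)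
    (hinj : Function.Injective x) (hfree : ∀ t, ∃ i, x i t = 0) :
    ∃ ρ : Equiv.Perm (Fin 3), ∃ A B C E F G : Fin d, Admissible A B C E F G ∧
      x (ρ 0) = pairPos A B ∧ x (ρ 1) = pairPos C E ∧ x (ρ 2) = pairPos F G := by
  by_cases hshare : ∃ ρ : Equiv.Perm (Fin 3), ∃ v, x (ρ 0) v ≠ 0 ∧ x (ρ 2) v ≠ 0
  · obtain ⟨ρ, v, h0, h2⟩ := hshare
    obtain ⟨B, hB⟩ := exists_eq_pairPos_of_ne_zero (hsum _) h0
    obtain ⟨F, hF⟩ := exists_eq_pairPos_of_ne_zero (hsum _) h2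
    obtain ⟨c, e, hce⟩ := exists_eq_pairPos (hsum (ρ 1))
    have h1 : x (ρ 1) v = 0 := by
      obtain ⟨i, hi⟩ := hfree v
      obtain ⟨m, rfl⟩ := ρ.surjective i
      fin_cases m <;> simp_all
    have hBF : B ≠ F := by
      rintro rfl
      exact absurd (ρ.injective (hinj (hB.trans hF.symm))) (by decide)
    rw [hce, pairPos_eq_zero_iff] at h1
    obtain ⟨C, E, hadm, hCE⟩ := exists_admissible_of_common hBF (Ne.symm h1.1) (Ne.symm h1.2)
    exact ⟨ρ, v, B, C, E, F, v, hadm, hB, hce.trans hCE, hF.trans (pairPos_comm _ _)⟩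
  · push Not at hshare
    have hdisj : ∀ i j, i ≠ j → ∀ y, x i y = 0 ∨ x j y = 0 := fun i j hij y => by
      obtain ⟨ρ, rfl, rfl⟩ := exists_perm_fin_three i j hij
      exact or_iff_not_imp_left.mpr (hshare ρ y)
    choose p q hpq using fun i => exists_eq_pairPos (hsum i)
    refine ⟨1, p 0, q 0, p 1, q 1, p 2, q 2, .of_disjoint ?_ ?_ ?_, hpq 0, hpq 1, hpq 2⟩ <;>
      simpa only [← hpq] using hdisj _ _ (by decide)

/-- Every collection of three spread out simplex positions in
`3·Δ_{d-1}` (three lattice points of `{x ∈ ℤ^d_{≥0} : Σ x_a = 2}` such that every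
sub-simplex of size `k` contains at most `k` of them) is achievable, up to renumbering,
as the simplex positions of some acyclic system of permutations on the edges of
`3·Δ_{d-1}`. -/
theorem stmt18 (d : ℕ) (x : Fin 3 → Fin d → ℕ)
    (hsum : ∀ i : Fin 3, ∑ a : Fin d, x i a = 2)
    (hspread : ∀ (m : Fin d → ℕ) (k : ℕ), (∑ a : Fin d, m a) + k = 3 →
      (Finset.univ.filter fun i : Fin 3 => ∀ a : Fin d, m a ≤ x i a).card ≤ k) :
    ∃ σ : Fin d → Fin d → Equiv.Perm (Fin 3), IsAcyclicSystem σ ∧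
      ∃ ρ : Equiv.Perm (Fin 3), ∀ (i : Fin 3) (a : Fin d),
        simplexPos σ i a = x (ρ i) a := by
  have hS : SpreadOut x := hspread
  obtain ⟨ρ, A, B, C, E, F, G, hadm, hx0, hx1, hx2⟩ := exists_admissible_labeling hsum
    (hS.injective fun i => by rw [hsum i]) (hS.exists_eq_zero (by norm_num))
  obtain ⟨σ, hσ, hs0, hs1, hs2⟩ := hadm.exists_isAcyclicSystem
  refine ⟨σ, hσ, ρ, fun i a => ?_⟩
  fin_cases i
  · exact congrFun (hs0.trans hx0.symm) a
  · exact congrFun (hs1.trans hx1.symm) a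
  · exact congrFun (hs2.trans hx2.symm) a
end

section
/- Let u, v, w be three permutations of [n] forming a system of permutations on the edges of a triangle (read clockwise), arising from a lozenge tiling of n·Δ_2. Then for every pair of distinct i, j ∈ [n], it is not the case that i precedes j in all three of u, v, w. (That is, the system of permutations of a lozenge tiling is acyclic.) -/
open scoped Classical

/-- Trace of a colour downwards (towards the bottom edge of the triangle): from the
upward triangle `(r, c)`, the colour crosses the bottom edge into the downward triangle
`(r+1, c)` and continues from the upward triangle paired with it, until it reaches the
bottom row `r = n-1` and exits the bottom edge at column `c`.  The fuel argument
guarantees termination. -/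
def traceB {n : ℕ} (f : DownT n → UpT n) : ℕ → UpT n → UpT n
  | 0, u => u
  | fuel + 1, u =>
    if h : (u.1.1 : ℕ) + 1 < n then
      traceB f fuel (f ⟨(⟨(u.1.1 : ℕ) + 1, h⟩, u.1.2), by
        have h2 : (u.1.2 : ℕ) ≤ (u.1.1 : ℕ) := u.2
        exact Nat.lt_succ_of_le h2⟩)
    else u

/-- Trace of a colour towards the left edge of the triangle: from the upward triangle
`(r, c)`, the colour crosses its left edge into the downward triangle `(r, c-1)` and
continues from the upward triangle paired with it, until it reaches `c = 0` and exits
the left edge at row `r`. -/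
def traceL {n : ℕ} (f : DownT n → UpT n) : ℕ → UpT n → UpT n
  | 0, u => u
  | fuel + 1, u =>
    if h : 0 < (u.1.2 : ℕ) then
      traceL f fuel (f ⟨(u.1.1, ⟨(u.1.2 : ℕ) - 1, by have := u.1.2.isLt; omega⟩), by
        have h2 : (u.1.2 : ℕ) ≤ (u.1.1 : ℕ) := u.2
        simp only [Fin.lt_def]
        omega⟩)
    else u

/-- Trace of a colour towards the right edge of the triangle: from the upward triangle
`(r, c)`, the colour crosses its right edge into the downward triangle `(r, c)` and
continues from the upward triangle paired with it, until it reaches `c = r` and exits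
the right edge at row `r`. -/
def traceR {n : ℕ} (f : DownT n → UpT n) : ℕ → UpT n → UpT n
  | 0, u => u
  | fuel + 1, u =>
    if h : (u.1.2 : ℕ) < (u.1.1 : ℕ) then
      traceR f fuel (f ⟨(u.1.1, u.1.2), by exact h⟩)
    else u

/-!
Fix an edge of the triangle. Following a colour from its tile towards that edge, every rhombus it
enters moves it one row closer to the edge and at most one step sideways. The tiling pairs each
downward triangle with a single upward one, so two such paths never merge: paths starting on a
common row parallel to the edge reach it in their starting order, and a path starting `d` rows
farther away can drift by at most `d` before the two are on a common row. These three
inequalities, one per edge, are incompatible with `i` preceding `j` in all of `u`, `v`, `w`.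
-/

theorem upT_ext {n : ℕ} {x y : UpT n} (h₁ : (x.1.1 : ℕ) = y.1.1) (h₂ : (x.1.2 : ℕ) = y.1.2) :
    x = y :=
  Subtype.ext (Prod.ext (Fin.ext h₁) (Fin.ext h₂))

/-- A direction of travel towards one edge of `n·Δ_2`: from an upward triangle `x` at
distance `level x > 0` from that edge, a path crosses into the downward triangle `cross x`,
whose upward neighbours other than `x` are one level closer and at most one step lower in `pos`. -/
structure Direction (n : ℕ) where
  level : UpT n → ℕ
  pos : UpT n → ℕ
  cross : ∀ x, 0 < level x → DownT n
  cross_injective : ∀ x y hx hy, cross x hx = cross y hy → x = y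
  adj_cross : ∀ x hx u, AdjDU (cross x hx) u →
    u = x ∨ (level u + 1 = level x ∧ pos u ≤ pos x ∧ pos x ≤ pos u + 1)
  level_pos_injective : ∀ x y, level x = level y → pos x = pos y → x = y

namespace Direction

open Function

variable {n : ℕ} (D : Direction n) (f : DownT n → UpT n)

def next (x : UpT n) : UpT n :=
  if h : 0 < D.level x then f (D.cross x h) else x

def Unblocked (x : UpT n) : Prop :=
  0 < D.level x → D.next f x ≠ x

def exit (x : UpT n) : UpT n :=
  (D.next f)^[D.level x] x

variable {D f}

theorem next_of_pos {x : UpT n} (hx : 0 < D.level x) : D.next f x = f (D.cross x hx) :=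
  dif_pos hx

theorem unblocked_of_forall_ne {x : UpT n} (hx : ∀ d, f d ≠ x) : D.Unblocked f x :=
  fun h => by rw [next_of_pos h]; exact hx _

theorem next_injOn (hf : IsLozengeTiling f) {x y : UpT n} (hx : 0 < D.level x)
    (hy : 0 < D.level y) (h : D.next f x = D.next f y) : x = y := by
  rw [next_of_pos hx, next_of_pos hy] at h
  exact D.cross_injective x y hx hy (hf.1 h)

theorem Unblocked.next_spec (hf : IsLozengeTiling f) {x : UpT n} (hx : D.Unblocked f x)
    (h : 0 < D.level x) :
    D.level (D.next f x) + 1 = D.level x ∧ D.pos (D.next f x) ≤ D.pos x ∧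
      D.pos x ≤ D.pos (D.next f x) + 1 := by
  have hadj := D.adj_cross x h _ (hf.2 (D.cross x h))
  rw [← next_of_pos (f := f) h] at hadj
  exact hadj.resolve_left (hx h)

theorem Unblocked.next (hf : IsLozengeTiling f) {x : UpT n} (hx : D.Unblocked f x)
    (h : 0 < D.level x) : D.Unblocked f (D.next f x) :=
  fun h' heq => hx h (next_injOn hf h' h heq)

theorem Unblocked.iterate (hf : IsLozengeTiling f) {x : UpT n} (hx : D.Unblocked f x) :
    ∀ k ≤ D.level x, D.Unblocked f ((D.next f)^[k] x) ∧
      D.level ((D.next f)^[k] x) + k = D.level x ∧ D.pos ((D.next f)^[k] x) ≤ D.pos x ∧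
      D.pos x ≤ D.pos ((D.next f)^[k] x) + k
  | 0, _ => ⟨hx, rfl, le_rfl, le_rfl⟩
  | k + 1, hk => by
    obtain ⟨hy, hl, hp₁, hp₂⟩ := hx.iterate hf k (by omega)
    obtain ⟨hl', hp₁', hp₂'⟩ := hy.next_spec hf (by omega)
    rw [iterate_succ_apply']
    exact ⟨hy.next hf (by omega), by omega, by omega, by omega⟩

theorem exit_iterate (hf : IsLozengeTiling f) {x : UpT n} (hx : D.Unblocked f x) {k : ℕ}
    (hk : k ≤ D.level x) : D.exit f ((D.next f)^[k] x) = D.exit f x := by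
  have hl := (hx.iterate hf k hk).2.1
  rw [exit, exit, ← iterate_add_apply, show D.level ((D.next f)^[k] x) + k = D.level x from hl]

theorem trace_eq_exit (hf : IsLozengeTiling f) (T : ℕ → UpT n → UpT n) (hT₀ : ∀ x, T 0 x = x)
    (hT : ∀ m x, T (m + 1) x = if 0 < D.level x then T m (D.next f x) else x) :
    ∀ m {x}, D.Unblocked f x → D.level x ≤ m → T m x = D.exit f x
  | 0, x, _, hm => by rw [hT₀, exit, Nat.le_zero.mp hm, iterate_zero_apply]
  | m + 1, x, hx, hm => by
    rw [hT]
    split_ifs with h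
    · obtain ⟨hl, -⟩ := hx.next_spec hf h
      rw [trace_eq_exit hf T hT₀ hT m (hx.next hf h) (by omega), exit, exit,
        ← iterate_succ_apply, Nat.succ_eq_add_one, hl]
    · rw [exit, show D.level x = 0 by omega, iterate_zero_apply]

/-- Paths never merge, and one step changes the gap between two of them by at most one. -/
theorem pos_next_lt_pos_next (hf : IsLozengeTiling f) {x y : UpT n} (hx : D.Unblocked f x)
    (hy : D.Unblocked f y) (hl : D.level x = D.level y) (h : 0 < D.level x)
    (hp : D.pos x < D.pos y) : D.pos (D.next f x) < D.pos (D.next f y) := by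
  obtain ⟨hlx, hpx, -⟩ := hx.next_spec hf h
  obtain ⟨hly, -, hpy⟩ := hy.next_spec hf (hl ▸ h)
  have hne : D.pos (D.next f x) ≠ D.pos (D.next f y) := fun heq =>
    hp.ne (congrArg D.pos (next_injOn hf h (hl ▸ h)
      (D.level_pos_injective _ _ (by omega) heq)))
  omega

theorem pos_exit_lt_of_level_eq (hf : IsLozengeTiling f) {x y : UpT n}
    (hx : D.Unblocked f x) (hy : D.Unblocked f y) (hl : D.level x = D.level y)
    (hp : D.pos x < D.pos y) : D.pos (D.exit f x) < D.pos (D.exit f y) := by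
  suffices ∀ k ≤ D.level x, D.pos ((D.next f)^[k] x) < D.pos ((D.next f)^[k] y) by
    rw [exit, exit, ← hl]; exact this _ le_rfl
  intro k
  induction k with
  | zero => exact fun _ => hp
  | succ k ih =>
    intro hk
    obtain ⟨hx', hlx, -⟩ := hx.iterate hf k (by omega)
    obtain ⟨hy', hly, -⟩ := hy.iterate hf k (by omega)
    rw [iterate_succ_apply', iterate_succ_apply']
    exact pos_next_lt_pos_next hf hx' hy' (by omega) (by omega) (ih (by omega))

/-- Follow both paths down to the common level `min (level x) (level y)` and compare there.
Subtraction is truncated: when `level y ≤ level x` the hypothesis reads `pos x ≤ pos y`. -/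
theorem pos_exit_le (hf : IsLozengeTiling f) {x y : UpT n} (hx : D.Unblocked f x)
    (hy : D.Unblocked f y) (hp : D.pos x + (D.level y - D.level x) ≤ D.pos y) :
    D.pos (D.exit f x) ≤ D.pos (D.exit f y) := by
  obtain ⟨hx', hlx, hpx, -⟩ := hx.iterate hf (D.level x - D.level y) (by omega)
  obtain ⟨hy', hly, -, hpy⟩ := hy.iterate hf (D.level y - D.level x) (by omega)
  rw [← exit_iterate hf hx (by omega : D.level x - D.level y ≤ D.level x),
    ← exit_iterate hf hy (by omega : D.level y - D.level x ≤ D.level y)]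
  have hl : D.level ((D.next f)^[D.level x - D.level y] x) =
      D.level ((D.next f)^[D.level y - D.level x] y) := by omega
  rcases (show D.pos ((D.next f)^[D.level x - D.level y] x) ≤
      D.pos ((D.next f)^[D.level y - D.level x] y) by omega).lt_or_eq with hlt | heq
  · exact (pos_exit_lt_of_level_eq hf hx' hy' hl hlt).le
  · rw [D.level_pos_injective _ _ hl heq]

@[simps level pos]
def toLeft : Direction n where
  level x := x.1.2
  pos x := x.1.1
  cross x h := ⟨(x.1.1, ⟨(x.1.2 : ℕ) - 1, by omega⟩), by
    have : (x.1.2 : ℕ) ≤ x.1.1 := x.2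
    simp only [Fin.lt_def]
    omega⟩
  cross_injective x y hx hy h := by
    have h₁ := congrArg (fun d : DownT n => (d.1.1 : ℕ)) h
    have h₂ := congrArg (fun d : DownT n => (d.1.2 : ℕ)) h
    dsimp only at h₁ h₂ hx hy
    exact upT_ext h₁ (by omega)
  adj_cross x hx u h := by
    dsimp only [AdjDU] at h hx ⊢
    rcases h with ⟨h₁, h₂⟩ | ⟨h₁, h₂⟩ | ⟨h₁, h₂⟩
    · right; omega
    · left; exact upT_ext h₁ (by omega)
    · right; omega
  level_pos_injective _ _ h₂ h₁ := upT_ext h₁ h₂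

@[simps level pos]
def toRight : Direction n where
  level x := x.1.1 - x.1.2
  pos x := x.1.1
  cross x h := ⟨(x.1.1, x.1.2), Nat.sub_pos_iff_lt.mp h⟩
  cross_injective x y hx hy h := by
    have h₁ := congrArg (fun d : DownT n => (d.1.1 : ℕ)) h
    have h₂ := congrArg (fun d : DownT n => (d.1.2 : ℕ)) h
    exact upT_ext h₁ h₂
  adj_cross x hx u h := by
    have : (u.1.2 : ℕ) ≤ u.1.1 := u.2
    dsimp only [AdjDU] at h hx ⊢
    rcases h with ⟨h₁, h₂⟩ | ⟨h₁, h₂⟩ | ⟨h₁, h₂⟩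
    · left; exact upT_ext h₁ h₂
    · right; omega
    · right; omega
  level_pos_injective x y h₁ h₂ := by
    have : (x.1.2 : ℕ) ≤ x.1.1 := x.2
    have : (y.1.2 : ℕ) ≤ y.1.1 := y.2
    change (x.1.1 : ℕ) - x.1.2 = y.1.1 - y.1.2 at h₁
    exact upT_ext h₂ (by omega)

@[simps level pos]
def toBottom : Direction n where
  level x := n - 1 - x.1.1
  pos x := n - 1 - x.1.2
  cross x h := ⟨(⟨(x.1.1 : ℕ) + 1, by omega⟩, x.1.2), by
    have : (x.1.2 : ℕ) ≤ x.1.1 := x.2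
    rw [Fin.lt_def]
    dsimp only
    omega⟩
  cross_injective x y hx hy h := by
    have h₁ := congrArg (fun d : DownT n => (d.1.1 : ℕ)) h
    have h₂ := congrArg (fun d : DownT n => (d.1.2 : ℕ)) h
    dsimp only at h₁ h₂
    exact upT_ext (by omega) h₂
  adj_cross x hx u h := by
    have := u.1.2.isLt
    dsimp only [AdjDU] at h hx ⊢
    rcases h with ⟨h₁, h₂⟩ | ⟨h₁, h₂⟩ | ⟨h₁, h₂⟩
    · right; omega
    · right; omega
    · left; exact upT_ext (by omega) h₂
  level_pos_injective x y h₁ h₂ := by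
    have := x.1.1.isLt; have := y.1.1.isLt; have := x.1.2.isLt; have := y.1.2.isLt
    change n - 1 - (x.1.1 : ℕ) = n - 1 - y.1.1 at h₁
    change n - 1 - (x.1.2 : ℕ) = n - 1 - y.1.2 at h₂
    exact upT_ext (by omega) (by omega)

variable (f)

theorem traceL_succ (m : ℕ) (x : UpT n) :
    traceL f (m + 1) x = if 0 < toLeft.level x then traceL f m (toLeft.next f x) else x := by
  by_cases h : 0 < (x.1.2 : ℕ)
  · rw [if_pos (show 0 < toLeft.level x from h), next_of_pos h, traceL, dif_pos h]; rfl
  · rw [if_neg (show ¬0 < toLeft.level x from h), traceL, dif_neg h]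

theorem traceR_succ (m : ℕ) (x : UpT n) :
    traceR f (m + 1) x = if 0 < toRight.level x then traceR f m (toRight.next f x) else x := by
  have hiff : 0 < toRight.level x ↔ (x.1.2 : ℕ) < x.1.1 := Nat.sub_pos_iff_lt
  by_cases h : (x.1.2 : ℕ) < x.1.1
  · rw [if_pos (hiff.2 h), next_of_pos (hiff.2 h), traceR, dif_pos h]; rfl
  · rw [if_neg (mt hiff.1 h), traceR, dif_neg h]

theorem traceB_succ (m : ℕ) (x : UpT n) :
    traceB f (m + 1) x = if 0 < toBottom.level x then traceB f m (toBottom.next f x) else x := by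
  have hiff : 0 < toBottom.level x ↔ (x.1.1 : ℕ) + 1 < n := by
    have := x.1.1.isLt; change 0 < n - 1 - (x.1.1 : ℕ) ↔ _; omega
  by_cases h : (x.1.1 : ℕ) + 1 < n
  · rw [if_pos (hiff.2 h), next_of_pos (hiff.2 h), traceB, dif_pos h]; rfl
  · rw [if_neg (mt hiff.1 h), traceB, dif_neg h]

variable {f}

theorem traceL_eq_exit (hf : IsLozengeTiling f) {x : UpT n} (hx : toLeft.Unblocked f x) :
    traceL f n x = toLeft.exit f x :=
  trace_eq_exit hf _ (fun _ => rfl) (traceL_succ f) n hx x.1.2.isLt.le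

theorem traceR_eq_exit (hf : IsLozengeTiling f) {x : UpT n} (hx : toRight.Unblocked f x) :
    traceR f n x = toRight.exit f x :=
  trace_eq_exit hf _ (fun _ => rfl) (traceR_succ f) n hx (by
    have := x.1.1.isLt; change (x.1.1 : ℕ) - x.1.2 ≤ n; omega)

theorem traceB_eq_exit (hf : IsLozengeTiling f) {x : UpT n} (hx : toBottom.Unblocked f x) :
    traceB f n x = toBottom.exit f x :=
  trace_eq_exit hf _ (fun _ => rfl) (traceB_succ f) n hx (Nat.sub_le _ _ |>.trans (Nat.sub_le _ _))

end Direction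

open Direction

theorem stmt19_general (n : ℕ) (f : DownT n → UpT n) (hf : IsLozengeTiling f)
    (t : Fin n → UpT n)
    (htri : ∀ (i : Fin n) (dt : DownT n), f dt ≠ t i)
    (u v w : Equiv.Perm (Fin n))
    (hu : ∀ k : Fin n, ((traceL f n (t (u k))).1.1 : ℕ) = n - 1 - (k : ℕ))
    (hv : ∀ k : Fin n, ((traceR f n (t (v k))).1.1 : ℕ) = (k : ℕ))
    (hw : ∀ k : Fin n, ((traceB f n (t (w k))).1.2 : ℕ) = n - 1 - (k : ℕ)) :
    ∀ i j : Fin n, i ≠ j →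
      ¬ (precedes u i j ∧ precedes v i j ∧ precedes w i j) := by
  rintro i j - ⟨hiju, hijv, hijw⟩
  have hunb (D : Direction n) (k : Fin n) : D.Unblocked f (t k) :=
    unblocked_of_forall_ne (htri k)
  have hLi := hu (u.symm i); have hLj := hu (u.symm j)
  have hRi := hv (v.symm i); have hRj := hv (v.symm j)
  have hBi := hw (w.symm i); have hBj := hw (w.symm j)
  simp only [Equiv.apply_symm_apply, traceL_eq_exit hf (hunb _ _), traceR_eq_exit hf (hunb _ _),
    traceB_eq_exit hf (hunb _ _)] at hLi hLj hRi hRj hBi hBj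
  have hL := mt (pos_exit_le hf (hunb toLeft i) (hunb toLeft j))
  have hR := mt (pos_exit_le hf (hunb toRight j) (hunb toRight i))
  have hB := mt (pos_exit_le hf (hunb toBottom j) (hunb toBottom i))
  simp only [toLeft_level, toLeft_pos, toRight_level, toRight_pos, toBottom_level,
    toBottom_pos, not_le] at hL hR hB
  have := (t i).2; have := (t j).2
  have := (t i).1.2.isLt; have := (t j).1.2.isLt; have := (t i).1.1.isLt; have := (t j).1.1.isLt
  simp only [precedes, Fin.lt_def] at hiju hijv hijw
  omega

/-- Let `u, v, w` be the system of permutations (read clockwise: `u` on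
the left edge from the bottom-left vertex up, `v` on the right edge downwards, `w` on the
bottom edge from right to left) induced by a lozenge tiling of `n·Δ_2` with unit triangle
tiles numbered by `t`.  Then the system is acyclic: no pair `i ≠ j` appears in the same
relative order in all three of `u, v, w`. -/
theorem stmt19 (n : ℕ) (f : DownT n → UpT n) (hf : IsLozengeTiling f)
    (t : Fin n → UpT n) (ht : Function.Injective t)
    (htri : ∀ (i : Fin n) (dt : DownT n), f dt ≠ t i)
    (u v w : Equiv.Perm (Fin n))
    (hu : ∀ k : Fin n, ((traceL f n (t (u k))).1.1 : ℕ) = n - 1 - (k : ℕ))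
    (hv : ∀ k : Fin n, ((traceR f n (t (v k))).1.1 : ℕ) = (k : ℕ))
    (hw : ∀ k : Fin n, ((traceB f n (t (w k))).1.2 : ℕ) = n - 1 - (k : ℕ)) :
    ∀ i j : Fin n, i ≠ j →
      ¬ (precedes u i j ∧ precedes v i j ∧ precedes w i j) :=
  stmt19_general n f hf t htri u v w hu hv hw
end
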